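/- arXiv:1312.1239 — 7 statements merged into one kernel-verified Lean document; each statement's English description precedes it below -/
import Mathlib

section
/- If P and Q are n×n complex matrices with PQ = 0, then (P+Q)^d = Q^π ∑_{i=0}^{t-1} Q^i (P^d)^{i+1} + ∑_{i=0}^{s-1} (Q^d)^{i+1} P^i P^π, where s = ind(P) and t = ind(Q). -/
open Matrix Finset

attribute [local instance] Classical.propDecidable

noncomputable def drazin {n : Type*} [Fintype n] [DecidableEq n]
    (A : Matrix n n ℂ) : Matrix n n ℂ :=
  if h : ∃ X : Matrix n n ℂ,
      A * X = X * A ∧ X * A * X = X ∧ ∃ k : ℕ, A ^ (k + 1) * X = A ^ k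
  then h.choose else 0

noncomputable def ind {n : Type*} [Fintype n] [DecidableEq n]
    (A : Matrix n n ℂ) : ℕ :=
  sInf {k : ℕ | (A ^ k).rank = (A ^ (k + 1)).rank}

noncomputable def spi {n : Type*} [Fintype n] [DecidableEq n]
    (A : Matrix n n ℂ) : Matrix n n ℂ :=
  1 - A * drazin A

namespace DrazinAux

abbrev Mat (n : ℕ) := Matrix (Fin n) (Fin n) ℂ

variable {n : ℕ}

/-- product of commuting powers -/
lemma pow_mul_pow_mul {A B : Mat n} (h : Commute A B) (i j k l : ℕ) :
    A ^ i * B ^ j * (A ^ k * B ^ l) = A ^ (i + k) * B ^ (j + l) := by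
  rw [(h.symm.pow_pow j k).mul_mul_mul_comm, ← pow_add, ← pow_add]

lemma drazin_exists (A : Mat n) : ∃ X : Mat n,
    A * X = X * A ∧ X * A * X = X ∧ ∃ k : ℕ, A ^ (k + 1) * X = A ^ k := by
  classical
  set p := A.charpoly with hp
  have hp0 : p ≠ 0 := (A.charpoly_monic).ne_zero
  set m := p.natTrailingDegree with hm
  have hdvd : Polynomial.X ^ m ∣ p := by
    rw [Polynomial.X_pow_dvd_iff]
    intro d hd
    exact Polynomial.coeff_eq_zero_of_lt_natTrailingDegree hd
  obtain ⟨q, hq⟩ := hdvd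
  set c := q.coeff 0 with hc
  have hc0 : c ≠ 0 := by
    have h1 : p.coeff m = q.coeff 0 := by
      rw [hq]
      simpa using Polynomial.coeff_X_pow_mul q m 0
    have h2 : p.coeff m ≠ 0 := by
      rw [hm]
      exact Polynomial.coeff_natTrailingDegree_ne_zero.mpr hp0
    rw [hc, ← h1]; exact h2
  have h0 : (Polynomial.aeval A) p = 0 := A.aeval_self_charpoly
  set H := (Polynomial.aeval A) q.divX with hH
  have hAH : A * H = H * A := by
    have h1 : (Polynomial.aeval A) (Polynomial.X * q.divX) =
        (Polynomial.aeval A) (q.divX * Polynomial.X) := by rw [mul_comm]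
    rw [_root_.map_mul, _root_.map_mul, Polynomial.aeval_X] at h1
    exact h1
  have hqe : (Polynomial.aeval A) q = H * A + c • 1 := by
    conv_lhs => rw [← q.divX_mul_X_add]
    rw [map_add, _root_.map_mul, Polynomial.aeval_X, Polynomial.aeval_C, ← hc,
      Algebra.algebraMap_eq_smul_one]
  have hexp : A ^ m * (H * A) + c • A ^ m = 0 := by
    have h1 : (Polynomial.aeval A) p = A ^ m * ((Polynomial.aeval A) q) := by
      rw [hq, _root_.map_mul, map_pow, Polynomial.aeval_X]
    rw [h0, hqe, mul_add, mul_smul_comm, mul_one] at h1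
    exact h1.symm
  set u : Mat n := (-c⁻¹) • H with hu
  have hAu : A * u = u * A := by
    rw [hu, mul_smul_comm, smul_mul_assoc, hAH]
  have hkey : A ^ (m + 1) * u = A ^ m := by
    have h2 : A ^ (m + 1) * H = A ^ m * (H * A) := by
      rw [pow_succ, mul_assoc, hAH, ← mul_assoc, mul_assoc]
    rw [hu, mul_smul_comm, h2]
    have h3 : A ^ m * (H * A) = -(c • A ^ m) := by
      rw [← sub_eq_zero, sub_neg_eq_add, hexp]
    rw [h3, smul_neg, neg_smul, neg_neg, smul_smul, inv_mul_cancel₀ hc0, one_smul]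
  have hcomm : Commute A u := hAu
  have hpow : ∀ j : ℕ, A ^ (m + j) * u ^ j = A ^ m := by
    intro j
    induction j with
    | zero => simp
    | succ j ih =>
      calc A ^ (m + (j + 1)) * u ^ (j + 1)
          = A ^ j * A ^ (m + 1) * (u * u ^ j) := by
            rw [← pow_add, pow_succ']
            congr 2
            omega
        _ = A ^ j * (A ^ (m + 1) * u * u ^ j) := by
            rw [mul_assoc, ← mul_assoc (A ^ (m + 1)) u (u ^ j)]
        _ = A ^ j * (A ^ m * u ^ j) := by rw [hkey]
        _ = A ^ (j + m) * u ^ j := by rw [← mul_assoc, ← pow_add]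
        _ = A ^ m := by rw [show j + m = m + j from by omega, ih]
  refine ⟨A ^ m * u ^ (m + 1), ?_, ?_, m, ?_⟩
  · exact (((Commute.refl A).pow_right m).mul_right (hcomm.pow_right (m + 1))).eq
  · calc A ^ m * u ^ (m + 1) * A * (A ^ m * u ^ (m + 1))
        = A ^ m * u ^ (m + 1) * (A ^ 1 * u ^ 0) * (A ^ m * u ^ (m + 1)) := by
          rw [pow_one, pow_zero, mul_one]
      _ = A ^ (m + 1) * u ^ (m + 1 + 0) * (A ^ m * u ^ (m + 1)) := by
          rw [pow_mul_pow_mul hcomm]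
      _ = A ^ (m + 1 + m) * u ^ (m + 1 + 0 + (m + 1)) := pow_mul_pow_mul hcomm _ _ _ _
      _ = A ^ (m + (m + 1)) * u ^ (m + 1) * u ^ (m + 1) := by
          rw [mul_assoc, ← pow_add]
          congr 2 <;> omega
      _ = A ^ m * u ^ (m + 1) := by rw [hpow (m + 1)]
  · calc A ^ (m + 1) * (A ^ m * u ^ (m + 1)) = A ^ (m + 1 + m) * u ^ (m + 1) := by
          rw [← mul_assoc, ← pow_add]
      _ = A ^ m := by rw [show m + 1 + m = m + (m + 1) from by omega, hpow]

lemma drazin_core_left {A X : Mat n} (h1 : A * X = X * A) (h2 : X * A * X = X) :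
    ∀ j : ℕ, A ^ j * X ^ (j + 1) = X := by
  have hc : Commute A X := h1
  intro j
  induction j with
  | zero => simp
  | succ j ih =>
    calc A ^ (j + 1) * X ^ (j + 2)
        = A ^ 1 * X ^ 1 * (A ^ j * X ^ (j + 1)) := by
          rw [pow_mul_pow_mul hc, show 1 + j = j + 1 from by omega,
            show 1 + (j + 1) = j + 2 from by omega]
      _ = A * X * X := by rw [ih, pow_one, pow_one]
      _ = X * A * X := by rw [h1]
      _ = X := h2

lemma drazin_core_right {A X : Mat n} (h1 : A * X = X * A) (h2 : X * A * X = X) :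
    ∀ j : ℕ, X ^ (j + 1) * A ^ j = X := by
  have hc : Commute X A := h1.symm
  intro j
  induction j with
  | zero => simp
  | succ j ih =>
    calc X ^ (j + 2) * A ^ (j + 1)
        = X ^ 1 * A ^ 1 * (X ^ (j + 1) * A ^ j) := by
          rw [pow_mul_pow_mul hc, show 1 + (j + 1) = j + 2 from by omega,
            show 1 + j = j + 1 from by omega]
      _ = X * A * X := by rw [ih, pow_one, pow_one]
      _ = X := h2

lemma pow_stab {A X : Mat n} {k : ℕ} (h : A ^ (k + 1) * X = A ^ k) :
    ∀ m : ℕ, k ≤ m → A ^ (m + 1) * X = A ^ m := by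
  intro m hk
  obtain ⟨d, rfl⟩ : ∃ d, m = k + d := ⟨m - k, by omega⟩
  clear hk
  induction d with
  | zero => exact h
  | succ d ih =>
    calc A ^ (k + (d + 1) + 1) * X = A * (A ^ (k + d + 1) * X) := by
          rw [show k + (d + 1) + 1 = k + d + 1 + 1 from by omega, pow_succ', mul_assoc]
      _ = A * A ^ (k + d) := by rw [ih]
      _ = A ^ (k + (d + 1)) := by
          rw [← pow_succ', show k + (d + 1) = k + d + 1 from by omega]

lemma drazin_unique {A X Y : Mat n}
    (hX1 : A * X = X * A) (hX2 : X * A * X = X) (hX3 : ∃ k : ℕ, A ^ (k + 1) * X = A ^ k)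
    (hY1 : A * Y = Y * A) (hY2 : Y * A * Y = Y) (hY3 : ∃ k : ℕ, A ^ (k + 1) * Y = A ^ k) :
    X = Y := by
  obtain ⟨k, hk⟩ := hX3
  obtain ⟨l, hl⟩ := hY3
  set m := max k l with hm
  have hXm : A ^ (m + 1) * X = A ^ m := pow_stab hk m (le_max_left k l)
  have hYm : A ^ (m + 1) * Y = A ^ m := pow_stab hl m (le_max_right k l)
  have hXc : Commute A X := hX1
  have hXAY : X = X * A * Y := by
    calc X = X ^ (m + 1) * A ^ m := (drazin_core_right hX1 hX2 m).symm
      _ = X ^ (m + 1) * (A ^ (m + 1) * Y) := by rw [hYm]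
      _ = X ^ (m + 1) * (A ^ m * (A * Y)) := by
          rw [show A ^ (m + 1) = A ^ m * A from pow_succ A m, mul_assoc]
      _ = X ^ (m + 1) * A ^ m * (A * Y) := by rw [← mul_assoc]
      _ = X * (A * Y) := by rw [drazin_core_right hX1 hX2 m]
      _ = X * A * Y := by rw [← mul_assoc]
  have hYXA : Y = X * A * Y := by
    have hcomm : X * A ^ (m + 1) = A ^ (m + 1) * X := ((hXc.symm).pow_right (m + 1)).eq
    calc Y = A ^ m * Y ^ (m + 1) := (drazin_core_left hY1 hY2 m).symm
      _ = A ^ (m + 1) * X * Y ^ (m + 1) := by rw [hXm]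
      _ = X * A ^ (m + 1) * Y ^ (m + 1) := by rw [← hcomm]
      _ = X * (A ^ (m + 1) * Y ^ (m + 1)) := by rw [mul_assoc]
      _ = X * (A * (A ^ m * Y ^ (m + 1))) := by
          rw [show A ^ (m + 1) = A * A ^ m from pow_succ' A m, mul_assoc]
      _ = X * (A * Y) := by rw [drazin_core_left hY1 hY2 m]
      _ = X * A * Y := by rw [← mul_assoc]
  rw [hXAY, ← hYXA]

lemma drazin_spec (A : Mat n) :
    A * drazin A = drazin A * A ∧ drazin A * A * drazin A = drazin A ∧
      ∃ k : ℕ, A ^ (k + 1) * drazin A = A ^ k := by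
  have h := drazin_exists A
  unfold drazin
  rw [dif_pos h]
  exact h.choose_spec

lemma drazin_eq {A X : Mat n}
    (h1 : A * X = X * A) (h2 : X * A * X = X) (h3 : ∃ k : ℕ, A ^ (k + 1) * X = A ^ k) :
    drazin A = X := by
  obtain ⟨g1, g2, g3⟩ := drazin_spec A
  exact drazin_unique g1 g2 g3 h1 h2 h3

lemma ind_rank_eq (A : Mat n) : (A ^ ind A).rank = (A ^ (ind A + 1)).rank := by
  have hne : {k : ℕ | (A ^ k).rank = (A ^ (k + 1)).rank}.Nonempty := by
    by_contra hc
    rw [Set.not_nonempty_iff_eq_empty] at hc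
    have hlt : ∀ k : ℕ, (A ^ (k + 1)).rank < (A ^ k).rank := by
      intro k
      have hle : (A ^ (k + 1)).rank ≤ (A ^ k).rank := by
        rw [pow_succ]
        exact Matrix.rank_mul_le_left _ _
      have hne' : (A ^ k).rank ≠ (A ^ (k + 1)).rank := by
        intro he
        have : k ∈ {k : ℕ | (A ^ k).rank = (A ^ (k + 1)).rank} := he
        rw [hc] at this
        exact this
      omega
    have hbound : ∀ k : ℕ, (A ^ k).rank + k ≤ (A ^ 0).rank := by
      intro k
      induction k with
      | zero => omega
      | succ k ih =>
        have := hlt k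
        omega
    have := hbound ((A ^ 0).rank + 1)
    omega
  exact Nat.sInf_mem hne

lemma ker_step (A : Mat n) :
    LinearMap.ker (A ^ (ind A + 1)).mulVecLin = LinearMap.ker (A ^ ind A).mulVecLin := by
  have hle : LinearMap.ker (A ^ ind A).mulVecLin ≤ LinearMap.ker (A ^ (ind A + 1)).mulVecLin := by
    intro x hx
    rw [LinearMap.mem_ker] at hx ⊢
    rw [pow_succ', Matrix.mulVecLin_mul, LinearMap.comp_apply, hx, map_zero]
  have hrank := ind_rank_eq A
  have h1 := LinearMap.finrank_range_add_finrank_ker (A ^ ind A).mulVecLin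
  have h2 := LinearMap.finrank_range_add_finrank_ker (A ^ (ind A + 1)).mulVecLin
  have e1 : (A ^ ind A).rank = Module.finrank ℂ (LinearMap.range (A ^ ind A).mulVecLin) := rfl
  have e2 : (A ^ (ind A + 1)).rank =
      Module.finrank ℂ (LinearMap.range (A ^ (ind A + 1)).mulVecLin) := rfl
  rw [e1, e2] at hrank
  have hfr : Module.finrank ℂ (LinearMap.ker (A ^ ind A).mulVecLin) =
      Module.finrank ℂ (LinearMap.ker (A ^ (ind A + 1)).mulVecLin) := by omega
  exact (Submodule.eq_of_le_of_finrank_eq hle hfr).symm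

lemma ker_stab (A : Mat n) (j : ℕ) :
    LinearMap.ker (A ^ (ind A + j)).mulVecLin = LinearMap.ker (A ^ ind A).mulVecLin := by
  induction j with
  | zero => rfl
  | succ j ih =>
    ext x
    rw [LinearMap.mem_ker, LinearMap.mem_ker]
    have e1 : A ^ (ind A + (j + 1)) = A ^ (ind A + j) * A := by
      rw [← pow_succ]
      rfl
    rw [e1, Matrix.mulVecLin_mul, LinearMap.comp_apply]
    constructor
    · intro hx
      have h1 : (A ^ ind A).mulVecLin (A.mulVecLin x) = 0 := by
        have hm : A.mulVecLin x ∈ LinearMap.ker (A ^ (ind A + j)).mulVecLin := hx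
        rw [ih] at hm
        exact hm
      have h2 : (A ^ (ind A + 1)).mulVecLin x = 0 := by
        rw [pow_succ, Matrix.mulVecLin_mul, LinearMap.comp_apply]
        exact h1
      have h3 : x ∈ LinearMap.ker (A ^ (ind A + 1)).mulVecLin := h2
      rw [ker_step A] at h3
      exact h3
    · intro hx
      have h3 : x ∈ LinearMap.ker (A ^ ind A).mulVecLin := hx
      rw [← ker_step A] at h3
      have h1 : (A ^ ind A).mulVecLin (A.mulVecLin x) = 0 := by
        have := h3.out
        rw [LinearMap.mem_ker, pow_succ, Matrix.mulVecLin_mul, LinearMap.comp_apply] at h3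
        exact h3
      have hm : A.mulVecLin x ∈ LinearMap.ker (A ^ ind A).mulVecLin := h1
      rw [← ih] at hm
      exact hm

lemma eq_zero_of_mulVec_zero {M : Mat n} (h : ∀ v, M *ᵥ v = 0) : M = 0 := by
  ext i j
  have := congrFun (h (Pi.single j 1)) i
  rw [Matrix.mulVec_single_one] at this
  simpa using this

lemma spi_comm (A : Mat n) : A * spi A = spi A * A := by
  obtain ⟨h1, _, _⟩ := drazin_spec A
  rw [spi, mul_sub, sub_mul, mul_one, one_mul, mul_assoc, h1, ← mul_assoc, h1]

lemma pow_spi (A : Mat n) (m : ℕ) (h : A ^ (m + 1) * drazin A = A ^ m) :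
    A ^ m * spi A = 0 := by
  rw [spi, mul_sub, mul_one, ← mul_assoc, ← pow_succ, h, sub_self]

lemma pow_ind_mul_spi (A : Mat n) : A ^ ind A * spi A = 0 := by
  obtain ⟨hcm, hmd, k, hk⟩ := drazin_spec A
  rcases le_or_gt k (ind A) with hle | hlt
  · exact pow_spi A (ind A) (pow_stab hk (ind A) hle)
  · have hmk : A ^ k * spi A = 0 := pow_spi A k hk
    apply eq_zero_of_mulVec_zero
    intro v
    have h1 : (A ^ k) *ᵥ (spi A *ᵥ v) = 0 := by
      rw [Matrix.mulVec_mulVec, hmk, Matrix.zero_mulVec]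
    have hker := ker_stab A (k - ind A)
    rw [show ind A + (k - ind A) = k from by omega] at hker
    have h2 : spi A *ᵥ v ∈ LinearMap.ker (A ^ k).mulVecLin := by
      rw [LinearMap.mem_ker, Matrix.mulVecLin_apply]
      exact h1
    rw [hker] at h2
    rw [LinearMap.mem_ker, Matrix.mulVecLin_apply] at h2
    rw [← Matrix.mulVec_mulVec, h2]

lemma spi_mul_pow_ind (A : Mat n) : spi A * A ^ ind A = 0 := by
  have hc : Commute (spi A) A := (spi_comm A).symm
  rw [(hc.pow_right (ind A)).eq, pow_ind_mul_spi]

lemma zmul {X Y : Mat n} (h : X * Y = 0) : ∀ i j : ℕ, X ^ (i + 1) * Y ^ (j + 1) = 0 := by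
  intro i j
  rw [pow_succ, pow_succ', mul_assoc, ← mul_assoc X Y, h, zero_mul, mul_zero]

lemma mul_spi_of {X Y : Mat n} (h : X * Y = 0) : X * spi Y = X := by
  rw [spi, mul_sub, mul_one, ← mul_assoc, h, zero_mul, sub_zero]

lemma spi_mul_of {X Y : Mat n} (h : drazin X * Y = 0) : spi X * Y = Y := by
  rw [spi, sub_mul, one_mul, mul_assoc, h, mul_zero, sub_zero]

lemma drazin_core2_left (A : Mat n) : A * (drazin A * drazin A) = drazin A := by
  obtain ⟨h1, h2, _⟩ := drazin_spec A
  have h := drazin_core_left h1 h2 1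
  rwa [pow_one, sq] at h

lemma drazin_core2_right (A : Mat n) : drazin A * drazin A * A = drazin A := by
  obtain ⟨h1, h2, _⟩ := drazin_spec A
  have h := drazin_core_right h1 h2 1
  rwa [pow_one, sq] at h

lemma spi_mul_drazin (A : Mat n) : spi A * drazin A = 0 := by
  rw [spi, sub_mul, one_mul, mul_assoc, drazin_core2_left, sub_self]

lemma drazin_mul_spi (A : Mat n) : drazin A * spi A = 0 := by
  obtain ⟨h1, h2, _⟩ := drazin_spec A
  rw [spi, mul_sub, mul_one, ← mul_assoc, h2, sub_self]

lemma spi_mul_core (A : Mat n) : spi A * (A * drazin A) = 0 := by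
  obtain ⟨h1, h2, _⟩ := drazin_spec A
  rw [spi, sub_mul, one_mul, mul_assoc, ← mul_assoc (drazin A) A (drazin A), h2, sub_self]

lemma drazin_pow_mul_core (A : Mat n) (i : ℕ) :
    (drazin A) ^ (i + 1) * (A * drazin A) = (drazin A) ^ (i + 1) := by
  obtain ⟨h1, h2, _⟩ := drazin_spec A
  rw [pow_succ, mul_assoc, ← mul_assoc (drazin A) A (drazin A), h2]

lemma drazin_pow_reduce (A : Mat n) (i : ℕ) :
    (drazin A) ^ (i + 2) * A = (drazin A) ^ (i + 1) := by
  rw [pow_add, sq, mul_assoc, drazin_core2_right, ← pow_succ]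

lemma mul_drazin_pow_reduce (A : Mat n) (i : ℕ) :
    A * (drazin A) ^ (i + 2) = (drazin A) ^ (i + 1) := by
  rw [show i + 2 = 2 + i from by omega, pow_add, ← mul_assoc, sq, drazin_core2_left,
    ← pow_succ']

lemma spi_pow_comm (A : Mat n) (i : ℕ) : spi A * A ^ i = A ^ i * spi A := by
  have hc : Commute (spi A) A := (spi_comm A).symm
  exact (hc.pow_right i).eq

lemma drazin_pow_comm (A : Mat n) (i : ℕ) : drazin A * A ^ i = A ^ i * drazin A := by
  have hc : Commute (drazin A) A := ((drazin_spec A).1).symm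
  exact (hc.pow_right i).eq

lemma add_pow_of_mul_eq_zero {P Q : Mat n} (h : P * Q = 0) (k : ℕ) :
    (P + Q) ^ k = ∑ i ∈ range (k + 1), Q ^ i * P ^ (k - i) := by
  induction k with
  | zero => simp
  | succ k ih =>
    rw [pow_succ, ih, Finset.sum_mul]
    have hterm : ∀ i ∈ range (k + 1),
        Q ^ i * P ^ (k - i) * (P + Q) = Q ^ i * P ^ (k + 1 - i) + Q ^ i * P ^ (k - i) * Q := by
      intro i hi
      rw [Finset.mem_range] at hi
      rw [mul_add, mul_assoc, ← pow_succ, show k - i + 1 = k + 1 - i from by omega]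
    rw [Finset.sum_congr rfl hterm, Finset.sum_add_distrib]
    have hsecond : ∑ i ∈ range (k + 1), Q ^ i * P ^ (k - i) * Q = Q ^ (k + 1) := by
      rw [Finset.sum_range_succ]
      have hz : ∑ i ∈ range k, Q ^ i * P ^ (k - i) * Q = 0 := by
        apply Finset.sum_eq_zero
        intro i hi
        rw [Finset.mem_range] at hi
        rw [show k - i = k - i - 1 + 1 from by omega, mul_assoc]
        have := zmul h (k - i - 1) 0
        rw [pow_one] at this
        rw [this, mul_zero]
      rw [hz, zero_add, Nat.sub_self, pow_zero, mul_one, ← pow_succ]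
    rw [hsecond, Finset.sum_range_succ (f := fun i => Q ^ i * P ^ (k + 1 - i)) (n := k + 1),
      Nat.sub_self, pow_zero, mul_one]

lemma main_key (P Q Pd Qd Pp Qp : Mat n)
    (hPdd : Pd = drazin P) (hQdd : Qd = drazin Q) (hPpd : Pp = spi P) (hQpd : Qp = spi Q)
    (hPQ : P * Q = 0) (a' b' : ℕ)
    (hPa : P ^ (a' + 1) * Pp = 0) (hQb : Qp * Q ^ (b' + 1) = 0) :
    drazin (P + Q) = Qp * ∑ i ∈ range (b' + 1), Q ^ i * Pd ^ (i + 1) +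
      ∑ i ∈ range (a' + 1), Qd ^ (i + 1) * P ^ i * Pp := by
  -- basic facts
  have hPc : P * Pd = Pd * P := by rw [hPdd]; exact (drazin_spec P).1
  have hPmid : Pd * P * Pd = Pd := by rw [hPdd]; exact (drazin_spec P).2.1
  have hQc : Q * Qd = Qd * Q := by rw [hQdd]; exact (drazin_spec Q).1
  have hQmid : Qd * Q * Qd = Qd := by rw [hQdd]; exact (drazin_spec Q).2.1
  have cPl : P * (Pd * Pd) = Pd := by rw [hPdd]; exact drazin_core2_left P
  have cPr : Pd * Pd * P = Pd := by rw [hPdd]; exact drazin_core2_right P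
  have cQl : Q * (Qd * Qd) = Qd := by rw [hQdd]; exact drazin_core2_left Q
  have cQr : Qd * Qd * Q = Qd := by rw [hQdd]; exact drazin_core2_right Q
  have zPdQ : Pd * Q = 0 := by
    calc Pd * Q = Pd * Pd * P * Q := by rw [cPr]
      _ = Pd * Pd * (P * Q) := by rw [mul_assoc]
      _ = 0 := by rw [hPQ, mul_zero]
  have zPQd : P * Qd = 0 := by
    calc P * Qd = P * (Q * (Qd * Qd)) := by rw [cQl]
      _ = P * Q * (Qd * Qd) := by rw [← mul_assoc]
      _ = 0 := by rw [hPQ, zero_mul]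
  have zPdQd : Pd * Qd = 0 := by
    calc Pd * Qd = Pd * (Q * (Qd * Qd)) := by rw [cQl]
      _ = Pd * Q * (Qd * Qd) := by rw [← mul_assoc]
      _ = 0 := by rw [zPdQ, zero_mul]
  have zpPQ : ∀ i j, P ^ (i + 1) * Q ^ (j + 1) = 0 := zmul hPQ
  have zpPdQ : ∀ i j, Pd ^ (i + 1) * Q ^ (j + 1) = 0 := zmul zPdQ
  have zpPQd : ∀ i j, P ^ (i + 1) * Qd ^ (j + 1) = 0 := zmul zPQd
  have zpPdQd : ∀ i j, Pd ^ (i + 1) * Qd ^ (j + 1) = 0 := zmul zPdQd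
  have z1PQ : ∀ j, P * Q ^ (j + 1) = 0 := fun j => by
    have := zpPQ 0 j; rwa [pow_one] at this
  have zP1Q : ∀ i, P ^ (i + 1) * Q = 0 := fun i => by
    have := zpPQ i 0; rwa [pow_one] at this
  have z1PdQ : ∀ j, Pd * Q ^ (j + 1) = 0 := fun j => by
    have := zpPdQ 0 j; rwa [pow_one] at this
  have zPd1Q : ∀ i, Pd ^ (i + 1) * Q = 0 := fun i => by
    have := zpPdQ i 0; rwa [pow_one] at this
  have z1PQd : ∀ j, P * Qd ^ (j + 1) = 0 := fun j => by
    have := zpPQd 0 j; rwa [pow_one] at this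
  -- absorption facts
  have aPQp : P * Qp = P := by rw [hQpd]; exact mul_spi_of hPQ
  have aPdQp : Pd * Qp = Pd := by rw [hQpd]; exact mul_spi_of zPdQ
  have aPp1Qp : ∀ i, P ^ (i + 1) * Qp = P ^ (i + 1) := fun i => by
    rw [hQpd]; exact mul_spi_of (zP1Q i)
  have aPdp1Qp : ∀ i, Pd ^ (i + 1) * Qp = Pd ^ (i + 1) := fun i => by
    rw [hQpd]; exact mul_spi_of (zPd1Q i)
  have zPdQ' : drazin P * Q = 0 := by rw [← hPdd]; exact zPdQ
  have aPpQ : Pp * Q = Q := by rw [hPpd]; exact spi_mul_of zPdQ'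
  have aPpQd : Pp * Qd = Qd := by
    rw [hPpd]; exact spi_mul_of (by rw [← hPdd]; exact zPdQd)
  have aPpQp1 : ∀ j, Pp * Q ^ (j + 1) = Q ^ (j + 1) := fun j => by
    rw [hPpd]; exact spi_mul_of (by rw [← hPdd]; exact z1PdQ j)
  have aPpQdp1 : ∀ j, Pp * Qd ^ (j + 1) = Qd ^ (j + 1) := fun j => by
    rw [hPpd]
    refine spi_mul_of ?_
    rw [← hPdd]
    have := zpPdQd 0 j; rwa [pow_one] at this
  -- spi zeros and commutation
  have sPpPd : Pp * Pd = 0 := by rw [hPpd, hPdd]; exact spi_mul_drazin P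
  have sPdPp : Pd * Pp = 0 := by rw [hPpd, hPdd]; exact drazin_mul_spi P
  have sQdQp : Qd * Qp = 0 := by rw [hQpd, hQdd]; exact drazin_mul_spi Q
  have sPpCore : Pp * (P * Pd) = 0 := by rw [hPpd, hPdd]; exact spi_mul_core P
  have rPd : ∀ i, Pd ^ (i + 1) * (P * Pd) = Pd ^ (i + 1) := fun i => by
    rw [hPdd]; exact drazin_pow_mul_core P i
  have rPd2 : ∀ i, Pd ^ (i + 2) * P = Pd ^ (i + 1) := fun i => by
    rw [hPdd]; exact drazin_pow_reduce P i
  have rQd2 : ∀ i, Q * Qd ^ (i + 2) = Qd ^ (i + 1) := fun i => by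
    rw [hQdd]; exact mul_drazin_pow_reduce Q i
  have cPpP : ∀ i, Pp * P ^ i = P ^ i * Pp := fun i => by
    rw [hPpd]; exact spi_pow_comm P i
  have cQpQ : ∀ i, Qp * Q ^ i = Q ^ i * Qp := fun i => by
    rw [hQpd]; exact spi_pow_comm Q i
  have cQdQ : ∀ i, Qd * Q ^ i = Q ^ i * Qd := fun i => by
    rw [hQdd]; exact drazin_pow_comm Q i
  -- the sums
  set SS := ∑ i ∈ range (b' + 1), Q ^ i * Pd ^ (i + 1) with hSS
  set TT := ∑ i ∈ range (a' + 1), Qd ^ (i + 1) * P ^ i * Pp with hTT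
  -- Computation 1a : (P+Q) * X = E
  have h1 : P * (Qp * SS) = P * Pd := by
    rw [← mul_assoc, aPQp, hSS, Finset.mul_sum, Finset.sum_range_succ']
    have hz : ∀ i ∈ range b', P * (Q ^ (i + 1) * Pd ^ (i + 1 + 1)) = 0 := by
      intro i _
      rw [← mul_assoc, z1PQ, zero_mul]
    rw [Finset.sum_congr rfl hz, Finset.sum_const_zero, zero_add, pow_zero, one_mul, pow_one]
  have h2 : P * TT = 0 := by
    rw [hTT, Finset.mul_sum]
    apply Finset.sum_eq_zero
    intro i _
    rw [← mul_assoc, ← mul_assoc, z1PQd, zero_mul, zero_mul]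
  have h3 : Q * (Qp * SS) = ∑ i ∈ range (b' + 1), Qp * Q ^ (i + 1) * Pd ^ (i + 1) := by
    have hqq : Q * Qp = Qp * Q := by rw [hQpd, spi_comm]
    rw [← mul_assoc, hqq, mul_assoc, hSS, Finset.mul_sum, Finset.mul_sum]
    refine Finset.sum_congr rfl fun i _ => ?_
    rw [← mul_assoc, ← mul_assoc, mul_assoc Qp Q (Q ^ i), ← pow_succ']
  have h4 : Q * TT = ∑ i ∈ range (a' + 1), Q * (Qd ^ (i + 1) * P ^ i * Pp) := by
    rw [hTT, Finset.mul_sum]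
  have hAX : (P + Q) * (Qp * SS + TT) =
      P * Pd + (∑ i ∈ range (b' + 1), Qp * Q ^ (i + 1) * Pd ^ (i + 1)) +
        ∑ i ∈ range (a' + 1), Q * (Qd ^ (i + 1) * P ^ i * Pp) := by
    rw [add_mul, mul_add, mul_add, h1, h2, h3, h4, add_zero, add_assoc]
  have cPpP1 : Pp * P = P * Pp := by
    have := cPpP 1; rwa [pow_one] at this
  -- Computation 1b : X * (P+Q) = same E
  have g1 : Qp * SS * P = (∑ i ∈ range b', Qp * Q ^ (i + 1) * Pd ^ (i + 1)) + Qp * (P * Pd) := by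
    rw [mul_assoc, hSS, Finset.sum_mul, Finset.mul_sum, Finset.sum_range_succ']
    congr 1
    · refine Finset.sum_congr rfl fun i _ => ?_
      rw [mul_assoc (Q ^ (i + 1)), rPd2 i, ← mul_assoc]
    · rw [pow_zero, one_mul, pow_one, hPc]
  have g2 : Qp * SS * Q = 0 := by
    rw [mul_assoc, hSS, Finset.sum_mul, Finset.mul_sum]
    apply Finset.sum_eq_zero
    intro i _
    rw [mul_assoc, zPd1Q, mul_zero, mul_zero]
  have g3 : TT * P = ∑ i ∈ range a', Qd ^ (i + 1) * P ^ (i + 1) * Pp := by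
    rw [hTT, Finset.sum_mul]
    have hterm : ∀ i ∈ range (a' + 1),
        Qd ^ (i + 1) * P ^ i * Pp * P = Qd ^ (i + 1) * P ^ (i + 1) * Pp := by
      intro i _
      rw [mul_assoc, cPpP1, ← mul_assoc, mul_assoc (Qd ^ (i + 1)) (P ^ i) P, ← pow_succ]
    rw [Finset.sum_congr rfl hterm, Finset.sum_range_succ, mul_assoc, hPa, mul_zero, add_zero]
  have g4 : TT * Q = Qd * Q := by
    rw [hTT, Finset.sum_mul, Finset.sum_range_succ']
    have hz : ∀ i ∈ range a', Qd ^ (i + 1 + 1) * P ^ (i + 1) * Pp * Q = 0 := by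
      intro i _
      rw [mul_assoc, aPpQ, mul_assoc, zP1Q, mul_zero]
    rw [Finset.sum_congr rfl hz, Finset.sum_const_zero, zero_add, pow_zero, pow_one, mul_one,
      mul_assoc, aPpQ]
  have hshift : ∀ i ∈ range a',
      Q * (Qd ^ (i + 1 + 1) * P ^ (i + 1) * Pp) = Qd ^ (i + 1) * P ^ (i + 1) * Pp := by
    intro i _
    rw [← mul_assoc, ← mul_assoc, rQd2]
  have h0term : Q * (Qd ^ (0 + 1) * P ^ 0 * Pp) = Q * Qd * Pp := by
    rw [zero_add, pow_one, pow_zero, mul_one, ← mul_assoc]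
  have hE2 : P * Pd + (∑ i ∈ range (b' + 1), Qp * Q ^ (i + 1) * Pd ^ (i + 1)) +
        ∑ i ∈ range (a' + 1), Q * (Qd ^ (i + 1) * P ^ i * Pp)
      = P * Pd + (∑ i ∈ range b', Qp * Q ^ (i + 1) * Pd ^ (i + 1)) +
        ((∑ i ∈ range a', Qd ^ (i + 1) * P ^ (i + 1) * Pp) + Q * Qd * Pp) := by
    rw [Finset.sum_range_succ (f := fun i => Qp * Q ^ (i + 1) * Pd ^ (i + 1)) (n := b')]
    rw [hQb, zero_mul, add_zero]
    rw [Finset.sum_range_succ' (f := fun i => Q * (Qd ^ (i + 1) * P ^ i * Pp)) (n := a')]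
    rw [Finset.sum_congr rfl hshift, h0term]
  have hswap : Qp * (P * Pd) + Qd * Q = P * Pd + Q * Qd * Pp := by
    rw [hQpd, hPpd, hQdd, hPdd, spi, spi, sub_mul, one_mul, mul_sub, mul_one]
    have hqc : Q * drazin Q = drazin Q * Q := (drazin_spec Q).1
    rw [← hqc]
    abel
  have hXA : (Qp * SS + TT) * (P + Q) = (P + Q) * (Qp * SS + TT) := by
    rw [hAX, hE2, add_mul, mul_add, mul_add, g1, g2, g3, g4, add_zero]
    calc (∑ i ∈ range b', Qp * Q ^ (i + 1) * Pd ^ (i + 1)) + Qp * (P * Pd) +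
          ((∑ i ∈ range a', Qd ^ (i + 1) * P ^ (i + 1) * Pp) + Qd * Q)
        = (Qp * (P * Pd) + Qd * Q) +
          ((∑ i ∈ range b', Qp * Q ^ (i + 1) * Pd ^ (i + 1)) +
            (∑ i ∈ range a', Qd ^ (i + 1) * P ^ (i + 1) * Pp)) := by abel
      _ = (P * Pd + Q * Qd * Pp) +
          ((∑ i ∈ range b', Qp * Q ^ (i + 1) * Pd ^ (i + 1)) +
            (∑ i ∈ range a', Qd ^ (i + 1) * P ^ (i + 1) * Pp)) := by rw [hswap]
      _ = P * Pd + (∑ i ∈ range b', Qp * Q ^ (i + 1) * Pd ^ (i + 1)) +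
          ((∑ i ∈ range a', Qd ^ (i + 1) * P ^ (i + 1) * Pp) + Q * Qd * Pp) := by abel
  -- Computation 2 : X * E = X
  have p1a : SS * (P * Pd) = SS := by
    rw [hSS, Finset.sum_mul]
    refine Finset.sum_congr rfl fun i _ => ?_
    rw [mul_assoc, rPd]
  have p1 : Qp * SS * (P * Pd) = Qp * SS := by rw [mul_assoc, p1a]
  have p2a : SS * (∑ i ∈ range (b' + 1), Qp * Q ^ (i + 1) * Pd ^ (i + 1)) = 0 := by
    rw [hSS, Finset.sum_mul_sum]
    refine Finset.sum_eq_zero fun i _ => Finset.sum_eq_zero fun j _ => ?_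
    rw [mul_assoc (Q ^ i), ← mul_assoc (Pd ^ (i + 1)) (Qp * Q ^ (j + 1)) (Pd ^ (j + 1)),
      ← mul_assoc (Pd ^ (i + 1)) Qp (Q ^ (j + 1)), aPdp1Qp i, zpPdQ i j, zero_mul, mul_zero]
  have p2 : Qp * SS * (∑ i ∈ range (b' + 1), Qp * Q ^ (i + 1) * Pd ^ (i + 1)) = 0 := by
    rw [mul_assoc, p2a, mul_zero]
  have p3a : SS * (∑ i ∈ range (a' + 1), Q * (Qd ^ (i + 1) * P ^ i * Pp)) = 0 := by
    rw [hSS, Finset.sum_mul_sum]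
    refine Finset.sum_eq_zero fun i _ => Finset.sum_eq_zero fun j _ => ?_
    rw [mul_assoc (Q ^ i), ← mul_assoc (Pd ^ (i + 1)) Q (Qd ^ (j + 1) * P ^ j * Pp),
      zPd1Q i, zero_mul, mul_zero]
  have p3 : Qp * SS * (∑ i ∈ range (a' + 1), Q * (Qd ^ (i + 1) * P ^ i * Pp)) = 0 := by
    rw [mul_assoc, p3a, mul_zero]
  have q1 : TT * (P * Pd) = 0 := by
    rw [hTT, Finset.sum_mul]
    refine Finset.sum_eq_zero fun i _ => ?_
    rw [mul_assoc, sPpCore, mul_zero]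
  have q2 : TT * (∑ i ∈ range (b' + 1), Qp * Q ^ (i + 1) * Pd ^ (i + 1)) = 0 := by
    rw [hTT, Finset.sum_mul_sum]
    refine Finset.sum_eq_zero fun i _ => Finset.sum_eq_zero fun j _ => ?_
    rw [cQpQ (j + 1), mul_assoc (Q ^ (j + 1)) Qp (Pd ^ (j + 1)),
      mul_assoc (Qd ^ (i + 1) * P ^ i) Pp (Q ^ (j + 1) * (Qp * Pd ^ (j + 1))),
      ← mul_assoc Pp (Q ^ (j + 1)) (Qp * Pd ^ (j + 1)), aPpQp1 j]
    match i with
    | 0 =>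
      rw [pow_one, pow_zero, mul_one, ← mul_assoc Qd (Q ^ (j + 1)) (Qp * Pd ^ (j + 1)),
        cQdQ (j + 1), mul_assoc (Q ^ (j + 1)) Qd (Qp * Pd ^ (j + 1)),
        ← mul_assoc Qd Qp (Pd ^ (j + 1)), sQdQp, zero_mul, mul_zero]
    | (i + 1) =>
      rw [mul_assoc (Qd ^ (i + 1 + 1)) (P ^ (i + 1)) (Q ^ (j + 1) * (Qp * Pd ^ (j + 1))),
        ← mul_assoc (P ^ (i + 1)) (Q ^ (j + 1)) (Qp * Pd ^ (j + 1)), zpPQ i j, zero_mul,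
        mul_zero]
  have q3 : TT * (∑ i ∈ range (a' + 1), Q * (Qd ^ (i + 1) * P ^ i * Pp)) = TT := by
    rw [hTT, Finset.sum_mul, Finset.sum_range_succ']
    have hrows : ∀ i ∈ range a',
        Qd ^ (i + 1 + 1) * P ^ (i + 1) * Pp *
          (∑ j ∈ range (a' + 1), Q * (Qd ^ (j + 1) * P ^ j * Pp)) = 0 := by
      intro i _
      rw [Finset.mul_sum]
      refine Finset.sum_eq_zero fun j _ => ?_
      rw [mul_assoc (Qd ^ (i + 1 + 1) * P ^ (i + 1)) Pp (Q * (Qd ^ (j + 1) * P ^ j * Pp)),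
        ← mul_assoc Pp Q (Qd ^ (j + 1) * P ^ j * Pp), aPpQ,
        mul_assoc (Qd ^ (i + 1 + 1)) (P ^ (i + 1)) (Q * (Qd ^ (j + 1) * P ^ j * Pp)),
        ← mul_assoc (P ^ (i + 1)) Q (Qd ^ (j + 1) * P ^ j * Pp), zP1Q, zero_mul, mul_zero]
    have hrow0 : Qd ^ (0 + 1) * P ^ 0 * Pp *
        (∑ j ∈ range (a' + 1), Q * (Qd ^ (j + 1) * P ^ j * Pp)) = TT := by
      rw [zero_add, pow_one, pow_zero, mul_one, Finset.mul_sum, hTT]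
      refine Finset.sum_congr rfl fun j _ => ?_
      rw [mul_assoc Qd Pp (Q * (Qd ^ (j + 1) * P ^ j * Pp)),
        ← mul_assoc Pp Q (Qd ^ (j + 1) * P ^ j * Pp), aPpQ,
        ← mul_assoc Qd Q (Qd ^ (j + 1) * P ^ j * Pp), ← hQc,
        ← mul_assoc (Q * Qd) (Qd ^ (j + 1) * P ^ j) Pp,
        ← mul_assoc (Q * Qd) (Qd ^ (j + 1)) (P ^ j),
        mul_assoc Q Qd (Qd ^ (j + 1)), ← pow_succ', show j + 1 + 1 = j + 2 from rfl,
        rQd2 j]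
    rw [Finset.sum_congr rfl hrows, Finset.sum_const_zero, zero_add, hrow0]
  have hXE : (Qp * SS + TT) *
      (P * Pd + (∑ i ∈ range (b' + 1), Qp * Q ^ (i + 1) * Pd ^ (i + 1)) +
        ∑ i ∈ range (a' + 1), Q * (Qd ^ (i + 1) * P ^ i * Pp)) = Qp * SS + TT := by
    rw [add_mul, mul_add, mul_add, mul_add, mul_add, p1, p2, p3, q1, q2, q3, add_zero,
      add_zero, zero_add, zero_add]
  -- abbreviate E
  set EE := P * Pd + (∑ i ∈ range (b' + 1), Qp * Q ^ (i + 1) * Pd ^ (i + 1)) +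
      ∑ i ∈ range (a' + 1), Q * (Qd ^ (i + 1) * P ^ i * Pp) with hEEdef
  have hcomm : (P + Q) * (Qp * SS + TT) = (Qp * SS + TT) * (P + Q) := hXA.symm
  have hXAX : (Qp * SS + TT) * (P + Q) * (Qp * SS + TT) = Qp * SS + TT := by
    rw [mul_assoc, hAX, hXE]
  have hEc : EE * (P + Q) = (P + Q) * EE := by
    calc EE * (P + Q) = (P + Q) * (Qp * SS + TT) * (P + Q) := by rw [hAX]
      _ = (P + Q) * ((Qp * SS + TT) * (P + Q)) := by rw [mul_assoc]
      _ = (P + Q) * ((P + Q) * (Qp * SS + TT)) := by rw [hXA]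
      _ = (P + Q) * EE := by rw [hAX]
  have hEE2 : EE * EE = EE := by
    calc EE * EE = (P + Q) * (Qp * SS + TT) * EE := by rw [hAX]
      _ = (P + Q) * ((Qp * SS + TT) * EE) := by rw [mul_assoc]
      _ = (P + Q) * (Qp * SS + TT) := by rw [hXE]
      _ = EE := hAX
  have hPE : ∀ j, P ^ (j + 1) * EE = P ^ (j + 1) * (P * Pd) := by
    intro j
    rw [hEEdef, mul_add, mul_add]
    have e2 : P ^ (j + 1) * (∑ i ∈ range (b' + 1), Qp * Q ^ (i + 1) * Pd ^ (i + 1)) = 0 := by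
      rw [Finset.mul_sum]
      refine Finset.sum_eq_zero fun i _ => ?_
      rw [← mul_assoc, ← mul_assoc, aPp1Qp j, zpPQ j i, zero_mul]
    have e3 : P ^ (j + 1) * (∑ i ∈ range (a' + 1), Q * (Qd ^ (i + 1) * P ^ i * Pp)) = 0 := by
      rw [Finset.mul_sum]
      refine Finset.sum_eq_zero fun i _ => ?_
      rw [← mul_assoc, zP1Q j, zero_mul]
    rw [e2, e3, add_zero, add_zero]
  have hPF : ∀ j, a' + 1 ≤ j → P ^ j * (1 - EE) = 0 := by
    intro j hj
    obtain ⟨j', rfl⟩ : ∃ j', j = j' + 1 := ⟨j - 1, by omega⟩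
    rw [mul_sub, mul_one, hPE j']
    have h2 : P ^ (j' + 1) - P ^ (j' + 1) * (P * Pd) = P ^ (j' + 1) * Pp := by
      rw [hPpd, hPdd, spi, mul_sub, mul_one]
    rw [h2, show j' + 1 = (j' - a') + (a' + 1) from by omega, pow_add, mul_assoc, hPa,
      mul_zero]
  have hQE : ∀ i, EE * Q ^ (i + 1) = Q * Qd * Q ^ (i + 1) := by
    intro i
    rw [hEEdef, add_mul, add_mul]
    have e1 : P * Pd * Q ^ (i + 1) = 0 := by rw [mul_assoc, z1PdQ i, mul_zero]
    have e2 : (∑ j ∈ range (b' + 1), Qp * Q ^ (j + 1) * Pd ^ (j + 1)) * Q ^ (i + 1) = 0 := by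
      rw [Finset.sum_mul]
      refine Finset.sum_eq_zero fun j _ => ?_
      rw [mul_assoc, zpPdQ j i, mul_zero]
    have e3 : (∑ j ∈ range (a' + 1), Q * (Qd ^ (j + 1) * P ^ j * Pp)) * Q ^ (i + 1)
        = Q * Qd * Q ^ (i + 1) := by
      rw [Finset.sum_mul, Finset.sum_range_succ']
      have hz : ∀ j ∈ range a', Q * (Qd ^ (j + 1 + 1) * P ^ (j + 1) * Pp) * Q ^ (i + 1) = 0 := by
        intro j _
        rw [mul_assoc Q (Qd ^ (j + 1 + 1) * P ^ (j + 1) * Pp) (Q ^ (i + 1)),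
          mul_assoc (Qd ^ (j + 1 + 1) * P ^ (j + 1)) Pp (Q ^ (i + 1)), aPpQp1 i,
          mul_assoc (Qd ^ (j + 1 + 1)) (P ^ (j + 1)) (Q ^ (i + 1)), zpPQ j i, mul_zero,
          mul_zero]
      rw [Finset.sum_congr rfl hz, Finset.sum_const_zero, zero_add, zero_add, pow_one,
        pow_zero, mul_one, mul_assoc Q (Qd * Pp) (Q ^ (i + 1)), mul_assoc Qd Pp (Q ^ (i + 1)),
        aPpQp1 i, ← mul_assoc]
    rw [e1, e2, e3, zero_add, zero_add]
  have hQF : ∀ i, b' + 1 ≤ i → (1 - EE) * Q ^ i = 0 := by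
    intro i hi
    obtain ⟨i', rfl⟩ : ∃ i', i = i' + 1 := ⟨i - 1, by omega⟩
    rw [sub_mul, one_mul, hQE i']
    have h2 : Q ^ (i' + 1) - Q * Qd * Q ^ (i' + 1) = Qp * Q ^ (i' + 1) := by
      rw [hQpd, hQdd, spi, sub_mul, one_mul]
    rw [h2, show i' + 1 = (b' + 1) + (i' - b') from by omega, pow_add, ← mul_assoc, hQb,
      zero_mul]
  have hFA : (1 - EE) * (P + Q) ^ (a' + b' + 2) = (P + Q) ^ (a' + b' + 2) * (1 - EE) := by
    have hc : Commute (1 - EE) (P + Q) := by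
      show (1 - EE) * (P + Q) = (P + Q) * (1 - EE)
      rw [sub_mul, one_mul, mul_sub, mul_one, hEc]
    exact (hc.pow_right (a' + b' + 2)).eq
  have hFF : (1 - EE) * (1 - EE) = 1 - EE := by
    rw [mul_sub, mul_one, sub_mul, one_mul, hEE2, sub_self, sub_zero]
  have hAkF : (P + Q) ^ (a' + b' + 2) * (1 - EE) = 0 := by
    have h1 : (P + Q) ^ (a' + b' + 2) * (1 - EE) =
        (1 - EE) * (P + Q) ^ (a' + b' + 2) * (1 - EE) := by
      rw [hFA, mul_assoc, hFF]
    rw [h1, add_pow_of_mul_eq_zero hPQ (a' + b' + 2), Finset.mul_sum, Finset.sum_mul]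
    refine Finset.sum_eq_zero fun i hi => ?_
    rcases le_or_gt (b' + 1) i with hc | hc
    · rw [← mul_assoc, hQF i hc, zero_mul, zero_mul]
    · have hj : a' + 1 ≤ a' + b' + 2 - i := by omega
      rw [mul_assoc, mul_assoc (Q ^ i), hPF _ hj, mul_zero, mul_zero]
  have hfinal : (P + Q) ^ (a' + b' + 2 + 1) * (Qp * SS + TT) = (P + Q) ^ (a' + b' + 2) := by
    rw [pow_succ, mul_assoc, hAX]
    have h2 : (P + Q) ^ (a' + b' + 2) * (1 - EE) =
        (P + Q) ^ (a' + b' + 2) - (P + Q) ^ (a' + b' + 2) * EE := by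
      rw [mul_sub, mul_one]
    rw [h2] at hAkF
    exact (sub_eq_zero.mp hAkF).symm
  exact drazin_eq hcomm hXAX ⟨a' + b' + 2, hfinal⟩

end DrazinAux

theorem stmt0 {n : ℕ} (P Q : Matrix (Fin n) (Fin n) ℂ) (h : P * Q = 0) :
    drazin (P + Q) =
      spi Q * ∑ i ∈ range (ind Q), Q ^ i * (drazin P) ^ (i + 1) +
      ∑ i ∈ range (ind P), (drazin Q) ^ (i + 1) * P ^ i * spi P := by
  have hPs : P ^ ind P * spi P = 0 := DrazinAux.pow_ind_mul_spi P
  have hQt : spi Q * Q ^ ind Q = 0 := DrazinAux.spi_mul_pow_ind Q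
  have hPa : P ^ (ind P + 1) * spi P = 0 := by
    rw [pow_succ', mul_assoc, hPs, mul_zero]
  have hQb : spi Q * Q ^ (ind Q + 1) = 0 := by
    rw [pow_succ, ← mul_assoc, hQt, zero_mul]
  have hmain := DrazinAux.main_key P Q (drazin P) (drazin Q) (spi P) (spi Q)
    rfl rfl rfl rfl h (ind P) (ind Q) hPa hQb
  rw [hmain, Finset.sum_range_succ (f := fun i => Q ^ i * drazin P ^ (i + 1)) (n := ind Q),
    Finset.sum_range_succ (f := fun i => drazin Q ^ (i + 1) * P ^ i * spi P) (n := ind P),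
    mul_add]
  have h1 : spi Q * (Q ^ ind Q * drazin P ^ (ind Q + 1)) = 0 := by
    rw [← mul_assoc, hQt, zero_mul]
  have h2 : drazin Q ^ (ind P + 1) * P ^ ind P * spi P = 0 := by
    rw [mul_assoc, hPs, mul_zero]
  rw [h1, h2, add_zero, add_zero]
end

section
/- Let A, C, D, B be complex matrices of compatible sizes with A and D square, and set S = A − C D^d B and S_A = S A A^d. If A^π C D^d B = 0, then S^d = S_A^d + ∑_{i=0}^{k-1} (S_A^d)^{i+2} S A^i A^π, where k = ind(A). -/
/-!
Write `P = A A^d` and `A^π = 1 - P`, so that `S = S_A + g` with `S_A = S P` and `g = S A^π`.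
The hypothesis says `A^π S = A^π A = A A^π`; hence `g S_A = S A A^π P = 0` and
`g^(i+1) = S A^i A^π`, which vanishes for `i = ind A`. For any `f` with Drazin inverse `y` and
nilpotent `g` with `g f = 0`, the word expansion `(f + g)^N = ∑ f^(N-i) g^i` shows that
`∑_{i ≤ k} y^(i+1) g^i` is the Drazin inverse of `f + g` (a case of the Hartwig–Wang–Wei formula);
the term `i = 0` is `S_A^d`, the others are the sum in the theorem.
-/

open Matrix Finset

attribute [local instance] Classical.propDecidable

section Monoid

variable {M : Type*} [Monoid M] {a q s u x y : M} {j k : ℕ}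

def IsDrazin (a x : M) : Prop :=
  a * x = x * a ∧ x * a * x = x ∧ ∃ k : ℕ, a ^ (k + 1) * x = a ^ k

theorem pow_add_mul_pow_of_pow_succ_mul (h : a ^ (k + 1) * u = a ^ k) (i : ℕ) :
    a ^ (k + i) * u ^ i = a ^ k := by
  induction i with
  | zero => simp
  | succ i ih =>
    calc a ^ (k + (i + 1)) * u ^ (i + 1) = a ^ i * (a ^ (k + 1) * u) * u ^ i := by
          rw [pow_succ' u, show k + (i + 1) = i + (k + 1) by omega, pow_add]
          simp only [mul_assoc]
      _ = a ^ k := by rw [h, ← pow_add, add_comm i, ih]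

theorem pow_add_mul_pow_of_le (h : a ^ (k + 1) * u = a ^ k) (hkj : k ≤ j) (i : ℕ) :
    a ^ (j + i) * u ^ i = a ^ j := by
  rw [show j + i = (j - k) + (k + i) by omega, pow_add, mul_assoc,
    pow_add_mul_pow_of_pow_succ_mul h, ← pow_add, Nat.sub_add_cancel hkj]

theorem isDrazin_pow_mul_pow_succ (hc : Commute a u) (h : a ^ (k + 1) * u = a ^ k) :
    IsDrazin a (a ^ k * u ^ (k + 1)) := by
  refine ⟨(((Commute.refl a).pow_right k).mul_right (hc.pow_right _)).eq, ?_, k, ?_⟩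
  · calc a ^ k * u ^ (k + 1) * a * (a ^ k * u ^ (k + 1))
        = a ^ k * (u ^ (k + 1) * a ^ (k + 1)) * u ^ (k + 1) := by
          rw [pow_succ' a k]; simp only [mul_assoc]
      _ = a ^ k * u ^ (k + 1) := by
          rw [← (hc.pow_pow _ _).eq, ← mul_assoc, ← pow_add, pow_add_mul_pow_of_pow_succ_mul h]
  · rw [← mul_assoc, ← pow_add, add_comm, pow_add_mul_pow_of_pow_succ_mul h]

theorem IsIdempotentElem.mul_pow_succ_eq (hq : IsIdempotentElem q) (hqs : q * s = a * q)
    (i : ℕ) : (s * q) ^ (i + 1) = s * a ^ i * q := by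
  induction i with
  | zero => simp
  | succ i ih =>
    calc (s * q) ^ (i + 1 + 1) = s * a ^ i * (q * s) * q := by
          rw [pow_succ, ih]; simp only [mul_assoc]
      _ = s * a ^ (i + 1) * q := by
          rw [hqs, pow_succ]; simp only [mul_assoc, hq.eq]

namespace IsDrazin

theorem commute (h : IsDrazin a x) : Commute a x := h.1

theorem mul_mul_self (h : IsDrazin a x) : a * (x * x) = x := by
  rw [← mul_assoc, h.1, h.2.1]

theorem pow_mul_pow_succ (h : IsDrazin a x) (i : ℕ) : a ^ i * x ^ (i + 1) = x := by
  induction i with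
  | zero => simp
  | succ i ih =>
    calc a ^ (i + 1) * x ^ (i + 1 + 1) = a ^ i * (a * (x * x)) * x ^ i := by
          rw [pow_succ a, pow_succ' x, pow_succ' x]; simp only [mul_assoc]
      _ = x := by rw [h.mul_mul_self, mul_assoc, ← pow_succ', ih]

theorem pow_succ_mul_pow (h : IsDrazin a x) (i : ℕ) : x ^ (i + 1) * a ^ i = x :=
  (h.commute.pow_pow i (i + 1)).eq.symm.trans (h.pow_mul_pow_succ i)

theorem mul_pow_add_two (h : IsDrazin a x) (i : ℕ) : a * x ^ (i + 2) = x ^ (i + 1) := by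
  rw [pow_succ' x (i + 1), pow_succ' x i, ← mul_assoc, ← mul_assoc, mul_assoc a, h.mul_mul_self]

theorem isIdempotentElem_mul (h : IsDrazin a x) : IsIdempotentElem (a * x) := by
  rw [IsIdempotentElem, mul_assoc, ← mul_assoc x, h.2.1]

theorem unique (hx : IsDrazin a x) (hy : IsDrazin a y) : x = y := by
  obtain ⟨k, hxk, hyk⟩ : ∃ k, a ^ (k + 1) * x = a ^ k ∧ a ^ (k + 1) * y = a ^ k := by
    obtain ⟨kx, hkx⟩ := hx.2.2
    obtain ⟨ky, hky⟩ := hy.2.2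
    exact ⟨kx + ky, by simpa using pow_add_mul_pow_of_le hkx (j := kx + ky) (by omega) 1,
      by simpa using pow_add_mul_pow_of_le hky (j := kx + ky) (by omega) 1⟩
  calc x = x ^ (k + 1) * (a ^ (k + 1) * y) := by rw [hyk, hx.pow_succ_mul_pow]
    _ = x * a * y := by rw [pow_succ a, ← mul_assoc, ← mul_assoc, hx.pow_succ_mul_pow]
    _ = x * a ^ (k + 1) * y ^ (k + 1) := by
          conv_lhs => rw [← hy.pow_mul_pow_succ k]
          rw [pow_succ' a]; simp only [mul_assoc]
    _ = a ^ (k + 1) * x * y ^ (k + 1) := by rw [(hx.commute.pow_left _).eq]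
    _ = y := by rw [hxk, hy.pow_mul_pow_succ]

end IsDrazin

end Monoid

theorem pow_succ_mul_eq_zero {M₀ : Type*} [MonoidWithZero M₀] {a b : M₀} (h : a * b = 0)
    (j : ℕ) : a ^ (j + 1) * b = 0 := by
  rw [pow_succ, mul_assoc, h, mul_zero]

section Ring

variable {R : Type*} [Ring R] {f g y : R}

theorem add_pow_eq_sum_of_mul_eq_zero (hgf : g * f = 0) (n : ℕ) :
    (f + g) ^ n = ∑ i ∈ range (n + 1), f ^ (n - i) * g ^ i := by
  induction n with
  | zero => simp
  | succ n ih =>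
    have hf : (∑ i ∈ range (n + 1), f ^ (n - i) * g ^ i) * f = f ^ (n + 1) := by
      rw [sum_mul, sum_eq_single 0 (fun i _ hi => ?_) (by simp)]
      · simp [pow_succ]
      · obtain ⟨j, rfl⟩ := Nat.exists_eq_succ_of_ne_zero hi
        rw [mul_assoc, pow_succ_mul_eq_zero hgf, mul_zero]
    rw [pow_succ, ih, mul_add, hf, sum_mul, sum_range_succ' _ (n + 1)]
    simp [mul_assoc, ← pow_succ, add_comm]

theorem IsDrazin.add_of_mul_eq_zero (hy : IsDrazin f y) (hgf : g * f = 0) {K : ℕ}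
    (hg : g ^ K = 0) : IsDrazin (f + g) (∑ i ∈ range K, y ^ (i + 1) * g ^ i) := by
  obtain _ | K := K
  · have : Subsingleton R := subsingleton_of_zero_eq_one (hg.symm.trans (pow_zero g))
    exact ⟨Subsingleton.elim _ _, Subsingleton.elim _ _, 0, Subsingleton.elim _ _⟩
  set z := ∑ i ∈ range (K + 1), y ^ (i + 1) * g ^ i with hz
  have hgy : g * y = 0 := by rw [← hy.mul_mul_self, ← mul_assoc, hgf, zero_mul]
  have hgz : g * z = 0 := by
    simp only [hz, mul_sum, pow_succ', ← mul_assoc, hgy, zero_mul, sum_const_zero]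
  have hzf : z * f = y * f := by
    rw [hz, sum_mul, sum_eq_single 0 (fun i _ hi => ?_) (by simp)]
    · simp
    · obtain ⟨j, rfl⟩ := Nat.exists_eq_succ_of_ne_zero hi
      rw [mul_assoc, pow_succ_mul_eq_zero hgf, mul_zero]
  have hyfz : y * f * z = z := by
    refine (mul_sum _ _ _).trans (sum_congr rfl fun i _ => ?_)
    rw [← mul_assoc, pow_succ', ← mul_assoc, hy.2.1]
  have hfz : f * z = f * y + ∑ i ∈ range K, y ^ (i + 1) * g ^ (i + 1) := by
    rw [hz, mul_sum, sum_range_succ', add_comm]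
    congr 1
    · simp
    · refine sum_congr rfl fun i _ => ?_
      rw [← mul_assoc, hy.mul_pow_add_two]
  have hzg : z * g = ∑ i ∈ range K, y ^ (i + 1) * g ^ (i + 1) := by
    rw [hz, sum_mul, sum_range_succ]
    simp only [mul_assoc, ← pow_succ, hg, mul_zero, add_zero]
  refine ⟨?_, ?_, ?_⟩
  · rw [mul_add, add_mul, hgz, add_zero, hfz, hzf, hzg, hy.1]
  · rw [mul_assoc, add_mul, hgz, add_zero, ← mul_assoc, hzf, hyfz]
  · obtain ⟨k, hk⟩ := hy.2.2
    set N := k + K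
    have hlhs : (f + g) ^ (N + 1) * z = f ^ (N + 1) * z := by
      rw [add_pow_eq_sum_of_mul_eq_zero hgf, sum_mul, sum_eq_single 0 (fun i _ hi => ?_) (by simp)]
      · simp
      · obtain ⟨j, rfl⟩ := Nat.exists_eq_succ_of_ne_zero hi
        rw [mul_assoc, pow_succ_mul_eq_zero hgz, mul_zero]
    have hfNz : f ^ (N + 1) * z = ∑ i ∈ range (K + 1), f ^ (N - i) * g ^ i := by
      refine (mul_sum _ _ _).trans (sum_congr rfl fun i hi => ?_)
      have hi : i ≤ K := Nat.lt_succ_iff.1 (mem_range.1 hi)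
      rw [← mul_assoc, ← pow_add_mul_pow_of_le hk (j := N - i) (by omega) (i + 1),
        show N - i + (i + 1) = N + 1 by omega]
    have hrhs : (f + g) ^ N = ∑ i ∈ range (K + 1), f ^ (N - i) * g ^ i := by
      rw [add_pow_eq_sum_of_mul_eq_zero hgf]
      refine (sum_subset (range_subset_range.2 (by omega)) fun i _ hi => ?_).symm
      rw [pow_eq_zero_of_le (by simpa using hi) hg, mul_zero]
    exact ⟨N, by rw [hlhs, hfNz, hrhs]⟩

end Ring

open Polynomial in
theorem exists_isDrazin_of_aeval_eq_zero {K R : Type*} [Field K] [Ring R] [Algebra K R] {a : R}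
    {p : K[X]} (hp : p ≠ 0) (hpa : aeval a p = 0) : ∃ x, IsDrazin a x := by
  obtain ⟨q, hpq, hq⟩ := p.exists_eq_pow_rootMultiplicity_mul_and_not_dvd hp 0
  set r := p.rootMultiplicity 0
  simp only [map_zero, sub_zero] at hpq hq
  set c := q.coeff 0
  have hc : c ≠ 0 := fun h0 => hq (X_dvd_iff.2 h0)
  set w : K[X] := -C c⁻¹ * q.divX
  have hw : X ^ (r + 1) * w = X ^ r - C c⁻¹ * p := by
    have hcc : C c⁻¹ * C c = 1 := by rw [← C_mul, inv_mul_cancel₀ hc, C_1]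
    rw [hpq]
    linear_combination (-C c⁻¹ * X ^ r) * X_mul_divX_add q + X ^ r * hcc
  refine ⟨_, isDrazin_pow_mul_pow_succ (u := aeval a w) ?_ (k := r) ?_⟩
  · simpa using (Commute.all X w).map (aeval a)
  · simpa [hpa] using congrArg (aeval a) hw

section Matrix

variable {n : Type*} [Fintype n] [DecidableEq n]

theorem isDrazin_drazin (A : Matrix n n ℂ) : IsDrazin A (drazin A) := by
  have hA : ∃ X, IsDrazin A X :=
    exists_isDrazin_of_aeval_eq_zero A.charpoly_monic.ne_zero A.aeval_self_charpoly
  unfold IsDrazin at hA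
  rw [drazin, dif_pos hA]
  exact hA.choose_spec

theorem drazin_eq_of_isDrazin {A X : Matrix n n ℂ} (h : IsDrazin A X) : drazin A = X :=
  (isDrazin_drazin A).unique h

theorem Matrix.pow_mul_eq_zero_of_rank_pow_eq {K : Type*} [Field K] {A Q : Matrix n n K}
    {j m : ℕ} (hj : (A ^ j).rank = (A ^ (j + 1)).rank) (hm : A ^ m * Q = 0) :
    A ^ j * Q = 0 := by
  have hker : LinearMap.ker (A ^ j).mulVecLin = LinearMap.ker (A ^ (j + 1)).mulVecLin := by
    refine Submodule.eq_of_le_of_finrank_eq ?_ ?_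
    · rw [pow_succ', mulVecLin_mul]
      exact LinearMap.ker_le_ker_comp _ _
    · have h₁ := LinearMap.finrank_range_add_finrank_ker (A ^ j).mulVecLin
      have h₂ := LinearMap.finrank_range_add_finrank_ker (A ^ (j + 1)).mulVecLin
      rw [rank, rank] at hj
      omega
  have hstable : ∀ d v, A ^ (j + d) *ᵥ v = 0 → A ^ j *ᵥ v = 0 := by
    intro d
    induction d with
    | zero => simp
    | succ d ih =>
      intro v hv
      refine ih v ?_
      have hd : A ^ (j + 1) *ᵥ (A ^ d *ᵥ v) = 0 := by
        rwa [mulVec_mulVec, ← pow_add, show j + 1 + d = j + (d + 1) by omega]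
      have := (SetLike.ext_iff.1 hker (A ^ d *ᵥ v)).2 hd
      rwa [LinearMap.mem_ker, mulVecLin_apply, mulVec_mulVec, ← pow_add] at this
  refine Matrix.toLin'.injective (LinearMap.ext fun v => ?_)
  have hv : A ^ (j + m) *ᵥ (Q *ᵥ v) = 0 := by rw [mulVec_mulVec, pow_add, mul_assoc, hm]; simp
  rw [toLin'_apply, map_zero, LinearMap.zero_apply, ← mulVec_mulVec]
  exact hstable m _ hv

theorem pow_ind_mul_spi (A : Matrix n n ℂ) : A ^ ind A * spi A = 0 := by
  obtain ⟨-, -, k, hk⟩ := isDrazin_drazin A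
  have hrank : (A ^ k).rank = (A ^ (k + 1)).rank :=
    le_antisymm (hk ▸ rank_mul_le_left _ _) (pow_succ A k ▸ rank_mul_le_left _ _)
  have hind : (A ^ ind A).rank = (A ^ (ind A + 1)).rank :=
    Nat.sInf_mem (s := {k | (A ^ k).rank = (A ^ (k + 1)).rank}) ⟨k, hrank⟩
  refine Matrix.pow_mul_eq_zero_of_rank_pow_eq hind (m := k) ?_
  rw [spi, mul_sub, mul_one, ← mul_assoc, ← pow_succ, hk, sub_self]

end Matrix

theorem stmt1 {n m : ℕ} (A : Matrix (Fin n) (Fin n) ℂ) (D : Matrix (Fin m) (Fin m) ℂ)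
    (C : Matrix (Fin n) (Fin m) ℂ) (B : Matrix (Fin m) (Fin n) ℂ)
    (S : Matrix (Fin n) (Fin n) ℂ) (hS : S = A - C * drazin D * B)
    (SA : Matrix (Fin n) (Fin n) ℂ) (hSA : SA = S * A * drazin A)
    (h : spi A * (C * drazin D * B) = 0) :
    drazin S = drazin SA +
      ∑ i ∈ range (ind A), (drazin SA) ^ (i + 2) * S * A ^ i * spi A := by
  have hA := isDrazin_drazin A
  have hP := hA.isIdempotentElem_mul
  have hQ : IsIdempotentElem (spi A) := hP.one_sub
  have hQP : spi A * (A * drazin A) = 0 := by rw [spi, sub_mul, one_mul, hP.eq, sub_self]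
  have hQS : spi A * S = A * spi A := by
    rw [hS, mul_sub, h, sub_zero]
    exact ((Commute.one_right A).sub_right ((Commute.refl A).mul_right hA.commute)).eq.symm
  have hsplit : S = SA + S * spi A := by rw [hSA, spi, mul_sub, mul_one, mul_assoc, add_sub_cancel]
  have hgf : S * spi A * SA = 0 := by
    rw [hSA, mul_assoc, mul_assoc, ← mul_assoc (spi A), hQS, mul_assoc A, hQP, mul_zero, mul_zero]
  have hnil : (S * spi A) ^ (ind A + 1) = 0 := by
    rw [hQ.mul_pow_succ_eq hQS, mul_assoc, pow_ind_mul_spi, mul_zero]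
  have key := (isDrazin_drazin SA).add_of_mul_eq_zero hgf hnil
  rw [← hsplit] at key
  rw [drazin_eq_of_isDrazin key, sum_range_succ', add_comm]
  simp [hQ.mul_pow_succ_eq hQS, mul_assoc]
end

section
/- Let X, Y, e be n×n complex matrices with e^2 = e. If X e Y = e, then e Y e X e = e. -/
open Matrix Finset

attribute [local instance] Classical.propDecidable

theorem stmt2 {n : ℕ} (X Y e : Matrix (Fin n) (Fin n) ℂ)
    (he : e ^ 2 = e) (h : X * e * Y = e) :
    e * Y * e * X * e = e := by
  have hee : e * e = e := by rw [← sq, he]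
  have hZW : ∀ Z W : Matrix (Fin n) (Fin n) ℂ,
      (e * Z * e) * (e * W * e) = e * (Z * e * W) * e := by
    intro Z W
    rw [show (e * Z * e) * (e * W * e) = e * Z * (e * e) * (W * e) from by
      simp only [mul_assoc], hee]
    simp only [mul_assoc]
  have h1 : ∀ Z : Matrix (Fin n) (Fin n) ℂ, (e * Z * e) * (1 - e) = 0 := by
    intro Z
    rw [mul_sub, mul_one, mul_assoc (e * Z) e e, hee, sub_self]
  have h2 : ∀ Z : Matrix (Fin n) (Fin n) ℂ, (1 - e) * (e * Z * e) = 0 := by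
    intro Z
    rw [sub_mul, one_mul, ← mul_assoc, ← mul_assoc, hee, sub_self]
  have h3 : ((1 : Matrix (Fin n) (Fin n) ℂ) - e) * (1 - e) = 1 - e := by
    rw [mul_sub, mul_one, sub_mul, one_mul, hee]; abel
  have hab : (e * X * e) * (e * Y * e) = e := by rw [hZW, h, hee, hee]
  have hAB : (e * X * e + (1 - e)) * (e * Y * e + (1 - e)) = 1 := by
    rw [add_mul, mul_add, mul_add, hab, h1, h2, h3]
    abel
  have hBA := mul_eq_one_comm.mp hAB
  rw [add_mul, mul_add, mul_add, h1, h2, h3, hZW] at hBA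
  simp only [add_zero, zero_add] at hBA
  have hba : e * (Y * e * X) * e = e := by
    have := eq_sub_of_add_eq hBA
    rwa [sub_sub_cancel] at this
  calc e * Y * e * X * e = e * (Y * e * X) * e := by simp only [mul_assoc]
    _ = e := hba
end

section
/- Let A, B, C, D be complex matrices of compatible sizes with A and D square. Set H = B A^d, K = A^d C, Z = D − B A^d C, S = A − C D^d B, S_A = A A^d S A A^d, and M = A^d + K Z^d H. Then the following are equivalent: (1) K D^π Z^d H = K D^d Z^π H; (2) S_A M = A A^d; (3) M S_A = A A^d; (4) K Z^π D^d H = K Z^d D^π H. -/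
open Matrix Finset

attribute [local instance] Classical.propDecidable

section DrazinExists

open Polynomial

lemma exists_drazin {N : Type*} [Fintype N] [DecidableEq N] (A : Matrix N N ℂ) :
    ∃ X : Matrix N N ℂ,
      A * X = X * A ∧ X * A * X = X ∧ ∃ k : ℕ, A ^ (k + 1) * X = A ^ k := by
  obtain ⟨g, hchi, hnd⟩ :=
    (Matrix.charpoly A).exists_eq_pow_rootMultiplicity_mul_and_not_dvd
      (Matrix.charpoly_monic A).ne_zero 0
  rw [_root_.map_zero, sub_zero] at hchi hnd
  set r := (Matrix.charpoly A).rootMultiplicity 0 with hr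
  have hcop : IsCoprime ((X : ℂ[X]) ^ (r + 1)) g :=
    ((Polynomial.irreducible_X.coprime_iff_not_dvd).mpr hnd).pow_left
  obtain ⟨u, v, huv⟩ := hcop
  have hAG : A ^ (r + 1) * aeval A g = 0 := by
    have h0 := Matrix.aeval_self_charpoly A
    rw [hchi, _root_.map_mul, _root_.map_pow, aeval_X] at h0
    rw [pow_succ', mul_assoc, h0, mul_zero]
  -- work in the commutative quotient ring
  set q0 : ℂ[X] := X ^ (r + 1) * g with hq0
  set I : Ideal ℂ[X] := Ideal.span {q0} with hI
  have hlift : ∀ a ∈ I, (Polynomial.aeval A).toRingHom a = 0 := by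
    intro a ha
    rw [hI, Ideal.mem_span_singleton] at ha
    obtain ⟨t, rfl⟩ := ha
    show aeval A (q0 * t) = 0
    rw [_root_.map_mul, hq0, _root_.map_mul, _root_.map_pow, aeval_X, hAG, zero_mul]
  set ψ : (ℂ[X] ⧸ I) →+* Matrix N N ℂ := Ideal.Quotient.lift I (aeval A).toRingHom hlift
    with hψ
  set mk : ℂ[X] →+* (ℂ[X] ⧸ I) := Ideal.Quotient.mk I with hmk
  set qx : ℂ[X] ⧸ I := mk X with hqx
  set qu : ℂ[X] ⧸ I := mk u with hqu
  set qv : ℂ[X] ⧸ I := mk v with hqv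
  set qg : ℂ[X] ⧸ I := mk g with hqg
  have hx0 : qx ^ (r + 1) * qg = 0 := by
    rw [hqx, hqg, ← _root_.map_pow, ← _root_.map_mul, hmk]
    exact Ideal.Quotient.eq_zero_iff_mem.mpr (hI ▸ Ideal.mem_span_singleton_self q0)
  have h1 : qu * qx ^ (r + 1) + qv * qg = 1 := by
    have := congrArg mk huv
    simpa [hqu, hqx, hqv, hqg, _root_.map_add, _root_.map_mul, _root_.map_pow, _root_.map_one] using this
  set y : ℂ[X] ⧸ I := qu * qu * qx ^ (2 * r + 1) with hy
  set p : ℂ[X] ⧸ I := qu * qx ^ (r + 1) with hp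
  have hpp : p * p = p := by
    rw [hp]
    linear_combination (-(qu * qv)) * hx0 + (qu * qx ^ (r + 1)) * h1
  have hxy : qx * y = p := by
    rw [hy, hp]
    have e : qx * (qu * qu * qx ^ (2 * r + 1)) = (qu * qx ^ (r + 1)) * (qu * qx ^ (r + 1)) := by
      ring
    rw [e, ← hp, hpp, hp]
  have hyxy : y * qx * y = y := by
    have e : y * qx * y = (qu * qx ^ r * p) * (qx * y) := by rw [hp, hy]; ring
    rw [e, hxy]
    have e2 : qu * qx ^ r * p * p = qu * qx ^ r * (p * p) := by ring
    rw [e2, hpp, hp, hy]; ring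
  have hxk : qx ^ (r + 1 + 1) * y = qx ^ (r + 1) := by
    have e : qx ^ (r + 1 + 1) * y = qx ^ (r + 1) * (qx * y) := by ring
    rw [e, hxy, hp]
    linear_combination (-qv) * hx0 + qx ^ (r + 1) * h1
  have hψx : ψ qx = A := by
    rw [hqx, hψ, hmk]
    show (Ideal.Quotient.lift I (aeval A).toRingHom hlift) (Ideal.Quotient.mk I X) = A
    rw [Ideal.Quotient.lift_mk]
    exact aeval_X A
  obtain ⟨Y, hc, hi, hk⟩ : ∃ Y : ℂ[X] ⧸ I,
      qx * Y = Y * qx ∧ Y * qx * Y = Y ∧ qx ^ (r + 1 + 1) * Y = qx ^ (r + 1) :=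
    ⟨y, by rw [hy]; ring, hyxy, hxk⟩
  refine ⟨ψ Y, ?_, ?_, r + 1, ?_⟩
  · have := congrArg ψ hc
    rwa [_root_.map_mul, _root_.map_mul, hψx] at this
  · have := congrArg ψ hi
    rwa [_root_.map_mul, _root_.map_mul, hψx] at this
  · have := congrArg ψ hk
    rwa [_root_.map_mul, _root_.map_pow, _root_.map_pow, hψx] at this

end DrazinExists

lemma drazin_spec {N : Type*} [Fintype N] [DecidableEq N] (A : Matrix N N ℂ) :
    A * drazin A = drazin A * A ∧ drazin A * A * drazin A = drazin A ∧
      ∃ k : ℕ, A ^ (k + 1) * drazin A = A ^ k := by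
  have h := exists_drazin A
  rw [drazin, dif_pos h]
  obtain ⟨h1, h2, h3⟩ := h.choose_spec
  exact ⟨h1, h2, h3⟩

set_option linter.unusedSectionVars false

section Aux

variable {l p : Type*} [Fintype l] [Fintype p]

lemma aux_shift (A a : Matrix l l ℂ) (h : A * a = a * A) (X : Matrix l p ℂ) :
    a * (A * X) = A * (a * X) := by
  rw [← Matrix.mul_assoc, ← h, Matrix.mul_assoc]

lemma aux_shift' (A a : Matrix l l ℂ) (h : A * a = a * A) : a * A = A * a := h.symm

lemma aux_col (A a : Matrix l l ℂ) (h1 : A * a = a * A) (h2 : a * A * a = a)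
    (X : Matrix l p ℂ) : A * (a * (a * X)) = a * X := by
  rw [← Matrix.mul_assoc, ← Matrix.mul_assoc, h1, h2]

lemma aux_col' (A a : Matrix l l ℂ) (h1 : A * a = a * A) (h2 : a * A * a = a) :
    A * (a * a) = a := by
  rw [← Matrix.mul_assoc, h1, h2]

lemma aux_mid (A a : Matrix l l ℂ) (h2 : a * A * a = a) (X : Matrix l p ℂ) :
    a * (A * (a * X)) = a * X := by
  rw [← Matrix.mul_assoc, ← Matrix.mul_assoc, h2]

lemma aux_mid' (A a : Matrix l l ℂ) (h2 : a * A * a = a) : a * (A * a) = a := by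
  rw [← Matrix.mul_assoc, h2]

end Aux

set_option maxHeartbeats 2000000 in
theorem stmt3 {n m : ℕ} (A : Matrix (Fin n) (Fin n) ℂ) (D : Matrix (Fin m) (Fin m) ℂ)
    (C : Matrix (Fin n) (Fin m) ℂ) (B : Matrix (Fin m) (Fin n) ℂ)
    (H : Matrix (Fin m) (Fin n) ℂ) (hH : H = B * drazin A)
    (K : Matrix (Fin n) (Fin m) ℂ) (hK : K = drazin A * C)
    (Z : Matrix (Fin m) (Fin m) ℂ) (hZ : Z = D - B * drazin A * C)
    (S : Matrix (Fin n) (Fin n) ℂ) (hS : S = A - C * drazin D * B)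
    (SA : Matrix (Fin n) (Fin n) ℂ) (hSA : SA = A * drazin A * S * (A * drazin A))
    (M : Matrix (Fin n) (Fin n) ℂ) (hM : M = drazin A + K * drazin Z * H) :
    List.TFAE [K * spi D * drazin Z * H = K * drazin D * spi Z * H,
               SA * M = A * drazin A,
               M * SA = A * drazin A,
               K * spi Z * drazin D * H = K * drazin Z * spi D * H] := by
  obtain ⟨hAc, hAi, -⟩ := drazin_spec A
  obtain ⟨hDc, hDi, -⟩ := drazin_spec D
  obtain ⟨hZc, hZi, -⟩ := drazin_spec Z
  have hBaC1 : ∀ X : Matrix (Fin m) (Fin n) ℂ,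
      B * (drazin A * (C * X)) = D * X - Z * X := by
    intro X
    rw [← Matrix.mul_assoc, ← Matrix.mul_assoc, ← Matrix.sub_mul]
    congr 1
    rw [hZ]; abel
  have hBaC2 : ∀ X : Matrix (Fin m) (Fin m) ℂ,
      B * (drazin A * (C * X)) = D * X - Z * X := by
    intro X
    rw [← Matrix.mul_assoc, ← Matrix.mul_assoc, ← Matrix.sub_mul]
    congr 1
    rw [hZ]; abel
  have hBaC' : B * (drazin A * C) = D - Z := by
    rw [← Matrix.mul_assoc, hZ]; abel
  have keyL : SA * M = A * drazin A
      + A * (K * spi D * drazin Z * H - K * drazin D * spi Z * H) := by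
    simp only [hSA, hM, hK, hH, hS, spi, Matrix.mul_add, Matrix.add_mul, Matrix.mul_sub,
      Matrix.sub_mul, Matrix.mul_one, Matrix.one_mul, Matrix.mul_assoc,
      hBaC1, hBaC2, hBaC',
      aux_shift A (drazin A) hAc, aux_shift D (drazin D) hDc, aux_shift Z (drazin Z) hZc,
      aux_shift' A (drazin A) hAc, aux_shift' D (drazin D) hDc, aux_shift' Z (drazin Z) hZc,
      aux_col A (drazin A) hAc hAi, aux_col' A (drazin A) hAc hAi,
      aux_col D (drazin D) hDc hDi, aux_col' D (drazin D) hDc hDi,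
      aux_col Z (drazin Z) hZc hZi, aux_col' Z (drazin Z) hZc hZi,
      aux_mid A (drazin A) hAi, aux_mid' A (drazin A) hAi,
      aux_mid D (drazin D) hDi, aux_mid' D (drazin D) hDi,
      aux_mid Z (drazin Z) hZi, aux_mid' Z (drazin Z) hZi]
    abel
  have keyR : M * SA = A * drazin A
      + (K * drazin Z * spi D * H - K * spi Z * drazin D * H) * A := by
    simp only [hSA, hM, hK, hH, hS, spi, Matrix.mul_add, Matrix.add_mul, Matrix.mul_sub,
      Matrix.sub_mul, Matrix.mul_one, Matrix.one_mul, Matrix.mul_assoc,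
      hBaC1, hBaC2, hBaC',
      aux_shift A (drazin A) hAc, aux_shift D (drazin D) hDc, aux_shift Z (drazin Z) hZc,
      aux_shift' A (drazin A) hAc, aux_shift' D (drazin D) hDc, aux_shift' Z (drazin Z) hZc,
      aux_col A (drazin A) hAc hAi, aux_col' A (drazin A) hAc hAi,
      aux_col D (drazin D) hDc hDi, aux_col' D (drazin D) hDc hDi,
      aux_col Z (drazin Z) hZc hZi, aux_col' Z (drazin Z) hZc hZi,
      aux_mid A (drazin A) hAi, aux_mid' A (drazin A) hAi,
      aux_mid D (drazin D) hDi, aux_mid' D (drazin D) hDi,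
      aux_mid Z (drazin Z) hZi, aux_mid' Z (drazin Z) hZi]
    abel
  have hPP : (A * drazin A) * (A * drazin A) = A * drazin A := by
    simp only [Matrix.mul_assoc, aux_shift A (drazin A) hAc, aux_shift' A (drazin A) hAc,
      aux_col A (drazin A) hAc hAi, aux_col' A (drazin A) hAc hAi,
      aux_mid A (drazin A) hAi, aux_mid' A (drazin A) hAi]
  have hMP : M * (A * drazin A) = M := by
    simp only [hM, hK, hH, Matrix.mul_add, Matrix.add_mul, Matrix.mul_assoc,
      aux_shift A (drazin A) hAc, aux_shift' A (drazin A) hAc,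
      aux_col A (drazin A) hAc hAi, aux_col' A (drazin A) hAc hAi,
      aux_mid A (drazin A) hAi, aux_mid' A (drazin A) hAi]
  have hPM : (A * drazin A) * M = M := by
    simp only [hM, hK, hH, Matrix.mul_add, Matrix.add_mul, Matrix.mul_assoc,
      aux_shift A (drazin A) hAc, aux_shift' A (drazin A) hAc,
      aux_col A (drazin A) hAc hAi, aux_col' A (drazin A) hAc hAi,
      aux_mid A (drazin A) hAi, aux_mid' A (drazin A) hAi]
  have hSP : SA * (A * drazin A) = SA := by
    simp only [hSA, Matrix.mul_assoc,
      aux_shift A (drazin A) hAc, aux_shift' A (drazin A) hAc,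
      aux_col A (drazin A) hAc hAi, aux_col' A (drazin A) hAc hAi,
      aux_mid A (drazin A) hAi, aux_mid' A (drazin A) hAi]
  have hPS : (A * drazin A) * SA = SA := by
    simp only [hSA, Matrix.mul_assoc,
      aux_shift A (drazin A) hAc, aux_shift' A (drazin A) hAc,
      aux_col A (drazin A) hAc hAi, aux_col' A (drazin A) hAc hAi,
      aux_mid A (drazin A) hAi, aux_mid' A (drazin A) hAi]
  tfae_have 1 → 2 := by
    intro h1
    rw [keyL, sub_eq_zero_of_eq h1, Matrix.mul_zero, add_zero]
  tfae_have 2 → 1 := by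
    intro h2
    have hW : A * (K * spi D * drazin Z * H - K * drazin D * spi Z * H) = 0 := by
      have := keyL.symm.trans h2
      nth_rewrite 2 [← add_zero (A * drazin A)] at this
      exact add_left_cancel this
    have e : drazin A * (A * (K * spi D * drazin Z * H - K * drazin D * spi Z * H))
        = K * spi D * drazin Z * H - K * drazin D * spi Z * H := by
      simp only [hK, Matrix.mul_sub, Matrix.mul_assoc, aux_mid A (drazin A) hAi]
    rw [hW, Matrix.mul_zero] at e
    exact sub_eq_zero.mp e.symm
  tfae_have 3 → 4 := by
    intro h3
    have hW : (K * drazin Z * spi D * H - K * spi Z * drazin D * H) * A = 0 := by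
      have := keyR.symm.trans h3
      nth_rewrite 2 [← add_zero (A * drazin A)] at this
      exact add_left_cancel this
    have e : (K * drazin Z * spi D * H - K * spi Z * drazin D * H) * A * drazin A
        = K * drazin Z * spi D * H - K * spi Z * drazin D * H := by
      simp only [hH, Matrix.sub_mul, Matrix.mul_assoc,
        aux_mid A (drazin A) hAi, aux_mid' A (drazin A) hAi]
    rw [hW, Matrix.zero_mul] at e
    exact (sub_eq_zero.mp e.symm).symm
  tfae_have 4 → 3 := by
    intro h4
    rw [keyR, sub_eq_zero_of_eq h4.symm, Matrix.zero_mul, add_zero]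
  have eSM : (SA + (1 - A * drazin A)) * (M + (1 - A * drazin A))
      = SA * M + (1 - A * drazin A) := by
    simp only [Matrix.add_mul, Matrix.mul_add, Matrix.mul_sub, Matrix.sub_mul,
      Matrix.mul_one, Matrix.one_mul, hSP, hPM, hPP]
    abel
  have eMS : (M + (1 - A * drazin A)) * (SA + (1 - A * drazin A))
      = M * SA + (1 - A * drazin A) := by
    simp only [Matrix.add_mul, Matrix.mul_add, Matrix.mul_sub, Matrix.sub_mul,
      Matrix.mul_one, Matrix.one_mul, hMP, hPS, hPP]
    abel
  tfae_have 2 → 3 := by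
    intro h2
    have hinv : (SA + (1 - A * drazin A)) * (M + (1 - A * drazin A)) = 1 := by
      rw [eSM, h2]; abel
    have hinv' := mul_eq_one_comm.mp hinv
    rw [eMS] at hinv'
    have := eq_sub_of_add_eq hinv'
    rwa [sub_sub_cancel] at this
  tfae_have 3 → 2 := by
    intro h3
    have hinv : (M + (1 - A * drazin A)) * (SA + (1 - A * drazin A)) = 1 := by
      rw [eMS, h3]; abel
    have hinv' := mul_eq_one_comm.mp hinv
    rw [eSM] at hinv'
    have := eq_sub_of_add_eq hinv'
    rwa [sub_sub_cancel] at this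
  tfae_finish
end

section
/- Let A, B, C, D be complex matrices of compatible sizes with A, D square. Set H = B A^d, K = A^d C, Z = D − B A^d C, S_A = A A^d (A − C D^d B) A A^d. If K D^π Z^d H = K D^d Z^π H, then S_A has a group inverse and S_A^# = A^d + K Z^d H. -/
/-!
Put `P = A A^d` and `G = A^d + K Z^d H`. Both `S_A` and `G` lie in the corner ring `P M P`.
Since `D` commutes with `D^d`, the hypothesis is equivalent to
`K Z^d H = K D^d H + K D^d (B A^d C) Z^d H`, and expanding shows that this is exactly
`S_A G = P`. In a corner of the Dedekind-finite ring of matrices a one-sided inverse is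
two-sided, so also `G S_A = P`, and the three group-inverse identities follow.
-/

open Matrix Finset

attribute [local instance] Classical.propDecidable

-- Adding `1 - p` to `s` and `g` turns `s * g = p` into an equation `s' * g' = 1`.
theorem IsIdempotentElem.mul_eq_of_mul_eq {R : Type*} [Ring R] [IsDedekindFiniteMonoid R]
    {p s g : R} (hp : IsIdempotentElem p) (hps : p * s = s) (hsp : s * p = s)
    (hpg : p * g = g) (hgp : g * p = g) (hsg : s * g = p) : g * s = p := by
  have hone : (s + (1 - p)) * (g + (1 - p)) = 1 := by
    simp only [mul_add, add_mul, mul_sub, sub_mul, mul_one, one_mul, hsg, hsp, hpg, hp.eq]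
    abel
  have hone' : g * s + (1 - p) = 1 := by
    convert mul_eq_one_comm.mp hone using 1
    simp only [mul_add, add_mul, mul_sub, sub_mul, mul_one, one_mul, hgp, hps, hp.eq]
    abel
  calc g * s = g * s + (1 - p) - (1 - p) := by abel
    _ = p := by rw [hone']; abel

theorem IsIdempotentElem.isGroupInverse_of_mul_eq {R : Type*} [Ring R]
    [IsDedekindFiniteMonoid R] {p s g : R} (hp : IsIdempotentElem p) (hps : p * s = s)
    (hsp : s * p = s) (hpg : p * g = g) (hgp : g * p = g) (hsg : s * g = p) :
    s * g * s = s ∧ g * s * g = g ∧ s * g = g * s := by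
  have hgs := hp.mul_eq_of_mul_eq hps hsp hpg hgp hsg
  exact ⟨by rw [hsg, hps], by rw [hgs, hpg], hsg.trans hgs.symm⟩

section Drazin

variable {n : Type*} [Fintype n] [DecidableEq n]

-- Both identities also hold for the junk value `0`, so no existence theorem is needed.
theorem commute_drazin (A : Matrix n n ℂ) : Commute A (drazin A) := by
  unfold drazin
  split_ifs with h
  exacts [h.choose_spec.1, Commute.zero_right A]

theorem drazin_mul_self_mul_drazin (A : Matrix n n ℂ) :
    drazin A * A * drazin A = drazin A := by
  unfold drazin
  split_ifs with h
  exacts [h.choose_spec.2.1, by simp]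

end Drazin

section BlockIdentities

variable {R : Type*} [Ring R] {n m p q : Type*} [Fintype n] [Fintype m]

theorem mul_eq_of_mul_one_sub_mul_eq [DecidableEq m] {D d z W : Matrix m m R}
    {X : Matrix p m R} {Y : Matrix m q R} (hDd : Commute D d)
    (h : X * (1 - D * d) * z * Y = X * d * (1 - (D - W) * z) * Y) :
    X * z * Y = X * d * Y + X * d * W * z * Y := by
  simp only [Matrix.mul_sub, Matrix.sub_mul, Matrix.mul_one, hDd.eq, Matrix.mul_assoc] at h
  rw [← sub_eq_zero] at h ⊢
  convert h using 1
  simp only [Matrix.mul_assoc]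
  abel

theorem mul_schur_mul_eq {A a : Matrix n n R} {d z : Matrix m m R} {B : Matrix m n R}
    {C : Matrix n m R} (hAa : Commute A a) (haAa : a * A * a = a)
    (hz : a * C * z * (B * a) = a * C * d * (B * a) + a * C * d * (B * a * C) * z * (B * a)) :
    A * a * (A - C * d * B) * (A * a) * (a + a * C * z * (B * a)) = A * a := by
  have hPa : A * a * a = a := by rw [hAa.eq, haAa]
  have hSa : A * a * (A - C * d * B) * (A * a) * a = A * a - A * (a * C * d * (B * a)) := by
    rw [Matrix.mul_assoc _ (A * a), hPa, Matrix.mul_sub, Matrix.sub_mul]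
    simp only [Matrix.mul_assoc]
    rw [← Matrix.mul_assoc a A a, haAa]
  calc A * a * (A - C * d * B) * (A * a) * (a + a * C * z * (B * a))
      = A * a * (A - C * d * B) * (A * a) * a
        + A * a * (A - C * d * B) * (A * a) * a * (C * z * (B * a)) := by
        rw [Matrix.mul_add]; simp only [Matrix.mul_assoc]
    _ = A * a - A * (a * C * d * (B * a))
        + (A * a - A * (a * C * d * (B * a))) * (C * z * (B * a)) := by rw [hSa]
    _ = A * a + A * (a * C * z * (B * a) - a * C * d * (B * a)
        - a * C * d * (B * a * C) * z * (B * a)) := by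
        simp only [Matrix.sub_mul, Matrix.mul_sub, Matrix.mul_assoc]; abel
    _ = A * a := by rw [hz]; simp [Matrix.mul_assoc]

end BlockIdentities

theorem stmt4 {n m : ℕ} (A : Matrix (Fin n) (Fin n) ℂ) (D : Matrix (Fin m) (Fin m) ℂ)
    (C : Matrix (Fin n) (Fin m) ℂ) (B : Matrix (Fin m) (Fin n) ℂ)
    (H : Matrix (Fin m) (Fin n) ℂ) (hH : H = B * drazin A)
    (K : Matrix (Fin n) (Fin m) ℂ) (hK : K = drazin A * C)
    (Z : Matrix (Fin m) (Fin m) ℂ) (hZ : Z = D - B * drazin A * C)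
    (SA : Matrix (Fin n) (Fin n) ℂ)
    (hSA : SA = A * drazin A * (A - C * drazin D * B) * (A * drazin A))
    (h : K * spi D * drazin Z * H = K * drazin D * spi Z * H) :
    SA * (drazin A + K * drazin Z * H) * SA = SA ∧
    (drazin A + K * drazin Z * H) * SA * (drazin A + K * drazin Z * H) =
      drazin A + K * drazin Z * H ∧
    SA * (drazin A + K * drazin Z * H) = (drazin A + K * drazin Z * H) * SA := by
  subst hH hK hZ hSA
  have hAa := commute_drazin A
  have haAa := drazin_mul_self_mul_drazin A
  set a := drazin A
  have hz := mul_eq_of_mul_one_sub_mul_eq (commute_drazin D) h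
  have hP : IsIdempotentElem (A * a) := by
    rw [IsIdempotentElem, Matrix.mul_assoc, ← Matrix.mul_assoc a, haAa]
  have hPa : A * a * a = a := by rw [hAa.eq, haAa]
  have haP : a * (A * a) = a := by rw [← Matrix.mul_assoc, haAa]
  refine hP.isGroupInverse_of_mul_eq ?_ ?_ ?_ ?_ (mul_schur_mul_eq hAa haAa hz)
  · simp only [← Matrix.mul_assoc, hP.eq]
  · rw [Matrix.mul_assoc _ (A * a), hP.eq]
  · simp only [Matrix.mul_add, ← Matrix.mul_assoc, hPa]
  · simp only [Matrix.add_mul, Matrix.mul_assoc, haP]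
end

section
/- Let P, Q, R be n×n complex matrices such that PQ = QP = QR = RP = R^2 = 0 and Q is nilpotent. Then (P + Q + R)^d = P^d + ∑_{i=0}^{t-1} (P^d)^{i+2} R Q^i, where t = ind(Q). -/
open Matrix Finset

attribute [local instance] Classical.propDecidable

private lemma idem_pow' {A : Type*} [Monoid A] (e : A) (he : e * e = e) :
    ∀ j, e ^ (j + 1) = e := by
  intro j
  induction j with
  | zero => simp
  | succ j ih => rw [pow_succ, ih, he]

private lemma dz_unique {A : Type*} [Ring A] (a X Y : A)
    (hX1 : a * X = X * a) (hX2 : X * a * X = X) (hX3 : ∃ k, a ^ (k + 1) * X = a ^ k)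
    (hY1 : a * Y = Y * a) (hY2 : Y * a * Y = Y) (hY3 : ∃ k, a ^ (k + 1) * Y = a ^ k) :
    X = Y := by
  obtain ⟨k, hk⟩ := hX3
  obtain ⟨l, hl⟩ := hY3
  set N := max k l with hN
  have hXN : a ^ (N + 1) * X = a ^ N := by
    have h : (N - k) + (k + 1) = N + 1 := by omega
    calc a ^ (N + 1) * X = a ^ (N - k) * (a ^ (k + 1) * X) := by
          rw [← mul_assoc, ← pow_add, h]
        _ = a ^ N := by rw [hk, ← pow_add]; congr 1; omega
  have hYN : a ^ (N + 1) * Y = a ^ N := by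
    have h : (N - l) + (l + 1) = N + 1 := by omega
    calc a ^ (N + 1) * Y = a ^ (N - l) * (a ^ (l + 1) * Y) := by
          rw [← mul_assoc, ← pow_add, h]
        _ = a ^ N := by rw [hl, ← pow_add]; congr 1; omega
  have cX : Commute a X := hX1
  have cY : Commute a Y := hY1
  have hf : (X * a) * (X * a) = X * a := by
    rw [← mul_assoc, hX2]
  have he : (a * Y) * (a * Y) = a * Y := by
    rw [mul_assoc, ← mul_assoc Y a Y, hY2]
  have stepX : ∀ j, (X * a) ^ j * X = X := by
    intro j
    induction j with
    | zero => simp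
    | succ j ih => rw [pow_succ, mul_assoc, hX2, ih]
  have stepY : ∀ j, Y * (a * Y) ^ j = Y := by
    intro j
    induction j with
    | zero => simp
    | succ j ih => rw [pow_succ', ← mul_assoc, ← mul_assoc, hY2, ih]
  have hXpow : X = X ^ (N + 1) * a ^ N := by
    calc X = (X * a) ^ N * X := (stepX N).symm
      _ = X ^ N * a ^ N * X := by rw [cX.symm.mul_pow]
      _ = X ^ N * (X * a ^ N) := by rw [mul_assoc, (cX.pow_left N).eq]
      _ = X ^ (N + 1) * a ^ N := by rw [← mul_assoc, ← pow_succ]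
  have hYpow : Y = a ^ N * Y ^ (N + 1) := by
    calc Y = Y * (a * Y) ^ N := (stepY N).symm
      _ = Y * (a ^ N * Y ^ N) := by rw [cY.mul_pow]
      _ = a ^ N * Y * Y ^ N := by rw [← mul_assoc, (cY.pow_left N).eq]
      _ = a ^ N * Y ^ (N + 1) := by rw [mul_assoc, ← pow_succ']
  have hX_eq : X = X * (a * Y) := by
    calc X = X ^ (N + 1) * a ^ N := hXpow
      _ = X ^ (N + 1) * (a ^ (N + 1) * Y) := by rw [hYN]
      _ = (X ^ (N + 1) * a ^ (N + 1)) * Y := by rw [mul_assoc]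
      _ = (X * a) ^ (N + 1) * Y := by rw [cX.symm.mul_pow]
      _ = (X * a) * Y := by rw [idem_pow' _ hf]
      _ = X * (a * Y) := by rw [mul_assoc]
  have hY_eq : Y = X * (a * Y) := by
    calc Y = a ^ N * Y ^ (N + 1) := hYpow
      _ = (a ^ (N + 1) * X) * Y ^ (N + 1) := by rw [hXN]
      _ = (X * a ^ (N + 1)) * Y ^ (N + 1) := by rw [(cX.pow_left (N + 1)).eq]
      _ = X * (a ^ (N + 1) * Y ^ (N + 1)) := by rw [mul_assoc]
      _ = X * (a * Y) ^ (N + 1) := by rw [cY.mul_pow]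
      _ = X * (a * Y) := by rw [idem_pow' _ he]
  exact hX_eq.trans hY_eq.symm

open Polynomial in
private lemma dz_exists {m : Type*} [Fintype m] [DecidableEq m] (A : Matrix m m ℂ) :
    ∃ X : Matrix m m ℂ, A * X = X * A ∧ X * A * X = X ∧ ∃ k : ℕ, A ^ (k + 1) * X = A ^ k := by
  classical
  have hp : A.charpoly ≠ 0 := A.charpoly_monic.ne_zero
  set k := A.charpoly.rootMultiplicity 0 with hkdef
  obtain ⟨q, hq, hndvd⟩ := A.charpoly.exists_eq_pow_rootMultiplicity_mul_and_not_dvd hp 0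
  rw [C_0, sub_zero] at hq hndvd
  have hco : IsCoprime ((X : ℂ[X]) ^ (k + 1)) q :=
    (Polynomial.irreducible_X.coprime_iff_not_dvd.mpr hndvd).pow_left
  obtain ⟨u, v, huv⟩ := hco
  set U : Matrix m m ℂ := Polynomial.aeval A u with hU
  have hA : (Polynomial.aeval A) (X : ℂ[X]) = A := Polynomial.aeval_X A
  have cAU : Commute A U := by
    show A * U = U * A
    calc A * U = Polynomial.aeval A ((X : ℂ[X]) * u) := by rw [_root_.map_mul, hA]
      _ = Polynomial.aeval A (u * (X : ℂ[X])) := by rw [mul_comm]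
      _ = U * A := by rw [_root_.map_mul, hA]
  have h1 : U * A ^ (k + 1) + (Polynomial.aeval A v) * (Polynomial.aeval A q) = 1 := by
    have := congrArg (Polynomial.aeval A) huv
    simpa [map_add, _root_.map_mul, map_pow, _root_.map_one, hA] using this
  have h2 : (Polynomial.aeval A q) * A ^ k = 0 := by
    have h0 : (Polynomial.aeval A) (q * (X : ℂ[X]) ^ k) = 0 := by
      rw [mul_comm, ← hq]
      exact Matrix.aeval_self_charpoly A
    simpa [_root_.map_mul, map_pow, hA] using h0
  have hrel : A ^ (k + 1) * (A ^ k * U) = A ^ k := by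
    have e1 : A ^ (k + 1) * (A ^ k * U) = (U * A ^ (k + 1)) * A ^ k := by
      calc A ^ (k + 1) * (A ^ k * U) = A ^ (k + 1) * (U * A ^ k) := by
            rw [(cAU.pow_left k).eq]
        _ = (A ^ (k + 1) * U) * A ^ k := by rw [mul_assoc]
        _ = (U * A ^ (k + 1)) * A ^ k := by rw [(cAU.pow_left (k + 1)).eq]
    rw [e1, eq_sub_of_add_eq h1, sub_mul, one_mul, mul_assoc, h2, mul_zero, sub_zero]
  set c : Matrix m m ℂ := A ^ k * U with hc
  have cc : Commute A c := ((Commute.refl A).pow_right k).mul_right cAU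
  have iter : ∀ j, A ^ (k + j) * c ^ j = A ^ k := by
    intro j
    induction j with
    | zero => simp
    | succ j ih =>
      calc A ^ (k + (j + 1)) * c ^ (j + 1) = (A * A ^ (k + j)) * (c ^ j * c) := by
            rw [show k + (j + 1) = (k + j) + 1 by omega, pow_succ', pow_succ]
        _ = A * ((A ^ (k + j) * c ^ j) * c) := by
            rw [mul_assoc, mul_assoc]
        _ = A ^ (k + 1) * c := by rw [ih, ← mul_assoc, ← pow_succ']
        _ = A ^ k := hrel
  refine ⟨A ^ k * c ^ (k + 1), ?_, ?_, ⟨k, ?_⟩⟩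
  case refine_3 =>
    calc A ^ (k + 1) * (A ^ k * c ^ (k + 1)) = (A ^ (k + 1) * A ^ k) * c ^ (k + 1) := by
          rw [mul_assoc]
      _ = A ^ (k + (k + 1)) * c ^ (k + 1) := by rw [← pow_add, Nat.add_comm]
      _ = A ^ k := iter (k + 1)
  case refine_1 =>
    exact (((Commute.refl A).pow_right k).mul_right (cc.pow_right (k + 1))).eq
  case refine_2 =>
    have cX : Commute A (A ^ k * c ^ (k + 1)) :=
      ((Commute.refl A).pow_right k).mul_right (cc.pow_right (k + 1))
    calc A ^ k * c ^ (k + 1) * A * (A ^ k * c ^ (k + 1))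
        = A * (A ^ k * c ^ (k + 1)) * (A ^ k * c ^ (k + 1)) := by
          rw [mul_assoc A, ← cX.eq, mul_assoc]
      _ = (A * A ^ k) * ((c ^ (k + 1) * A ^ k) * c ^ (k + 1)) := by
          simp only [mul_assoc]
      _ = (A * A ^ k) * ((A ^ k * c ^ (k + 1)) * c ^ (k + 1)) := by
          rw [(cc.pow_pow k (k + 1)).eq]
      _ = ((A * A ^ k) * A ^ k) * (c ^ (k + 1) * c ^ (k + 1)) := by
          simp only [mul_assoc]
      _ = A ^ (k + (k + 1)) * c ^ (k + 1) * c ^ (k + 1) := by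
          rw [← pow_succ', ← pow_add, mul_assoc]
          ring_nf
      _ = A ^ k * c ^ (k + 1) := by rw [iter (k + 1)]

private lemma dz_spec {m : Type*} [Fintype m] [DecidableEq m] (A : Matrix m m ℂ) :
    A * drazin A = drazin A * A ∧ drazin A * A * drazin A = drazin A ∧
      ∃ k : ℕ, A ^ (k + 1) * drazin A = A ^ k := by
  have hex := dz_exists A
  rw [drazin, dif_pos hex]
  exact hex.choose_spec

private lemma dz_eq {m : Type*} [Fintype m] [DecidableEq m] (A Y : Matrix m m ℂ)
    (hY1 : A * Y = Y * A) (hY2 : Y * A * Y = Y) (hY3 : ∃ k, A ^ (k + 1) * Y = A ^ k) :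
    drazin A = Y := by
  obtain ⟨s1, s2, s3⟩ := dz_spec A
  exact dz_unique A (drazin A) Y s1 s2 s3 hY1 hY2 hY3

private lemma pow_ind_eq_zero {m : Type*} [Fintype m] [DecidableEq m] (Q : Matrix m m ℂ)
    (hQ : IsNilpotent Q) : Q ^ (ind Q) = 0 := by
  obtain ⟨N, hN⟩ := hQ
  have hmem : N ∈ {k : ℕ | (Q ^ k).rank = (Q ^ (k + 1)).rank} := by
    have h1 : Q ^ (N + 1) = 0 := by rw [pow_succ, hN, zero_mul]
    simp [Set.mem_setOf_eq, hN, h1]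
  have ht : ind Q ∈ {k : ℕ | (Q ^ k).rank = (Q ^ (k + 1)).rank} :=
    Nat.sInf_mem ⟨N, hmem⟩
  set t := ind Q with htdef
  have hrank : (Q ^ t).rank = (Q ^ (t + 1)).rank := ht
  have hle : LinearMap.range (Q ^ (t + 1)).mulVecLin ≤ LinearMap.range (Q ^ t).mulVecLin := by
    rw [pow_succ, Matrix.mulVecLin_mul]
    exact LinearMap.range_comp_le_range _ _
  have heq : LinearMap.range (Q ^ (t + 1)).mulVecLin = LinearMap.range (Q ^ t).mulVecLin := by
    apply Submodule.eq_of_le_of_finrank_le hle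
    rw [Matrix.rank, Matrix.rank] at hrank
    exact le_of_eq hrank
  have stab : ∀ j, LinearMap.range (Q ^ (t + j)).mulVecLin
      = LinearMap.range (Q ^ t).mulVecLin := by
    intro j
    induction j with
    | zero => rfl
    | succ j ih =>
      have e1 : Q ^ (t + (j + 1)) = Q * Q ^ (t + j) := by
        rw [show t + (j + 1) = (t + j) + 1 by omega, pow_succ']
      have e2 : Q ^ (t + 1) = Q * Q ^ t := by rw [pow_succ']
      rw [e1, Matrix.mulVecLin_mul, LinearMap.range_comp, ih, ← LinearMap.range_comp,
        ← Matrix.mulVecLin_mul, ← e2, heq]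
  have hbot : LinearMap.range (Q ^ t).mulVecLin = ⊥ := by
    have := stab N
    rw [pow_add, hN, mul_zero] at this
    rw [← this, Matrix.mulVecLin_zero, LinearMap.range_zero]
  have h0 : (Q ^ t).mulVecLin = 0 := LinearMap.range_eq_bot.mp hbot
  ext i j
  have h1 : (Q ^ t).mulVecLin (Pi.single j 1) = 0 := by rw [h0]; rfl
  rw [Matrix.mulVecLin_apply, Matrix.mulVec_single_one] at h1
  have h2 := congrFun h1 i
  simpa [Matrix.transpose_apply] using h2

theorem stmt9 {n : ℕ} (P Q R : Matrix (Fin n) (Fin n) ℂ)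
    (h1 : P * Q = 0) (h2 : Q * P = 0) (h3 : Q * R = 0) (h4 : R * P = 0)
    (h5 : R ^ 2 = 0) (hQ : IsNilpotent Q) :
    drazin (P + Q + R) = drazin P +
      ∑ i ∈ range (ind Q), (drazin P) ^ (i + 2) * R * Q ^ i := by
  set Pd := drazin P with hPd
  set t := ind Q with htdef
  have hQt : Q ^ t = 0 := pow_ind_eq_zero Q hQ
  -- trivial case t = 0
  by_cases ht0 : t = 0
  · have h10 : (1 : Matrix (Fin n) (Fin n) ℂ) = 0 := by
      simpa [ht0] using hQt
    have hall : ∀ M : Matrix (Fin n) (Fin n) ℂ, M = 0 := fun M => by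
      calc M = M * 1 := (mul_one M).symm
        _ = 0 := by rw [h10, mul_zero]
    rw [hall (drazin (P + Q + R)), hall (Pd + ∑ i ∈ range t, Pd ^ (i + 2) * R * Q ^ i)]
  obtain ⟨t', ht'⟩ : ∃ t', t = t' + 1 := ⟨t - 1, by omega⟩
  obtain ⟨hc, hinv, k, hk⟩ := dz_spec P
  rw [← hPd] at hc hinv hk
  have cPPd : Commute P Pd := hc
  -- basic identities
  have hPd2 : Pd ^ 2 * P = Pd := by
    rw [pow_two, mul_assoc, ← hc, ← mul_assoc, hinv]
  have hP2d : P * Pd ^ 2 = Pd := by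
    rw [pow_two, ← mul_assoc, hc, hinv]
  have hPdQ : Pd * Q = 0 := by
    rw [← hPd2, mul_assoc, h1, mul_zero]
  have hQPd : Q * Pd = 0 := by
    rw [← hP2d, ← mul_assoc, h2, zero_mul]
  have hRPd : R * Pd = 0 := by
    rw [← hP2d, ← mul_assoc, h4, zero_mul]
  have hPdpowP : ∀ i, Pd ^ (i + 2) * P = Pd ^ (i + 1) := by
    intro i
    rw [pow_add, mul_assoc, hPd2, ← pow_succ]
  have hPpowPd : ∀ i, P * Pd ^ (i + 2) = Pd ^ (i + 1) := by
    intro i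
    rw [(cPPd.pow_right (i + 2)).eq, hPdpowP i]
  have hka : ∀ a, k ≤ a → P ^ (a + 1) * Pd = P ^ a := by
    intro a ha
    calc P ^ (a + 1) * Pd = P ^ (a - k) * (P ^ (k + 1) * Pd) := by
          rw [← mul_assoc, ← pow_add, show a - k + (k + 1) = a + 1 by omega]
      _ = P ^ a := by rw [hk, ← pow_add, show a - k + k = a by omega]
  have hpd : ∀ l a, k ≤ a → P ^ (a + l) * Pd ^ l = P ^ a := by
    intro l
    induction l with
    | zero => intro a _; simp
    | succ l ih =>
      intro a ha
      calc P ^ (a + (l + 1)) * Pd ^ (l + 1)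
          = (P ^ ((a + 1) + l) * Pd ^ l) * Pd := by
            rw [show a + (l + 1) = (a + 1) + l by omega, pow_succ, mul_assoc]
        _ = P ^ (a + 1) * Pd := by rw [ih (a + 1) (by omega)]
        _ = P ^ a := hka a ha
  -- zero product helpers
  have hRQiPd : ∀ i, R * Q ^ i * Pd = 0 := by
    intro i
    cases i with
    | zero => rw [pow_zero, mul_one, hRPd]
    | succ i => rw [pow_succ, ← mul_assoc, mul_assoc, hQPd, mul_zero]
  have hRQipd : ∀ i a, R * Q ^ i * Pd ^ (a + 1) = 0 := by
    intro i a
    rw [pow_succ', ← mul_assoc, hRQiPd, zero_mul]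
  have hRQiP : ∀ i, R * Q ^ i * P = 0 := by
    intro i
    cases i with
    | zero => rw [pow_zero, mul_one, h4]
    | succ i => rw [pow_succ, ← mul_assoc, mul_assoc, h2, mul_zero]
  have hRQiR : ∀ i, R * Q ^ i * R = 0 := by
    intro i
    cases i with
    | zero => rw [pow_zero, mul_one, ← pow_two, h5]
    | succ i => rw [pow_succ, ← mul_assoc, mul_assoc, h3, mul_zero]
  have hQPaR : ∀ a, Q * P ^ a * R = 0 := by
    intro a
    cases a with
    | zero => rw [pow_zero, mul_one, h3]
    | succ a => rw [pow_succ', ← mul_assoc, h2, zero_mul, zero_mul]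
  have hRPaR : ∀ a, R * P ^ a * R = 0 := by
    intro a
    cases a with
    | zero => rw [pow_zero, mul_one, ← pow_two, h5]
    | succ a => rw [pow_succ', ← mul_assoc, h4, zero_mul, zero_mul]
  have hQPa : ∀ a, Q * P ^ (a + 1) = 0 := by
    intro a; rw [pow_succ', ← mul_assoc, h2, zero_mul]
  have hRPa : ∀ a, R * P ^ (a + 1) = 0 := by
    intro a; rw [pow_succ', ← mul_assoc, h4, zero_mul]
  have hPQa : ∀ a, P * Q ^ (a + 1) = 0 := by
    intro a; rw [pow_succ', ← mul_assoc, h1, zero_mul]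
  have hQpdpow : ∀ a, Q * Pd ^ (a + 1) = 0 := by
    intro a; rw [pow_succ', ← mul_assoc, hQPd, zero_mul]
  have hRpdpow : ∀ a, R * Pd ^ (a + 1) = 0 := by
    intro a; rw [pow_succ', ← mul_assoc, hRPd, zero_mul]
  -- the power formula for A = P + Q + R
  have powA : ∀ m, (P + Q + R) ^ (m + 1)
      = P ^ (m + 1) + Q ^ (m + 1) + ∑ j ∈ range (m + 1), P ^ (m - j) * R * Q ^ j := by
    intro m
    induction m with
    | zero => simp
    | succ m ih =>
      have expand : (P + Q + R) ^ (m + 2)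
          = P * P ^ (m + 1) + P * Q ^ (m + 1)
            + P * (∑ j ∈ range (m + 1), P ^ (m - j) * R * Q ^ j)
            + (Q * P ^ (m + 1) + Q * Q ^ (m + 1)
            + Q * (∑ j ∈ range (m + 1), P ^ (m - j) * R * Q ^ j))
            + (R * P ^ (m + 1) + R * Q ^ (m + 1)
            + R * (∑ j ∈ range (m + 1), P ^ (m - j) * R * Q ^ j)) := by
        rw [pow_succ', ih]
        noncomm_ring
      have hPSm : P * (∑ j ∈ range (m + 1), P ^ (m - j) * R * Q ^ j)
          = ∑ j ∈ range (m + 1), P ^ (m + 1 - j) * R * Q ^ j := by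
        rw [Finset.mul_sum]
        refine Finset.sum_congr rfl fun j hj => ?_
        have hjm : j ≤ m := Nat.lt_succ_iff.mp (Finset.mem_range.mp hj)
        rw [← mul_assoc, ← mul_assoc, ← pow_succ', show (m - j) + 1 = m + 1 - j by omega]
      have hQSm : Q * (∑ j ∈ range (m + 1), P ^ (m - j) * R * Q ^ j) = 0 := by
        rw [Finset.mul_sum]
        refine Finset.sum_eq_zero fun j _ => ?_
        rw [← mul_assoc, ← mul_assoc, hQPaR, zero_mul]
      have hRSm : R * (∑ j ∈ range (m + 1), P ^ (m - j) * R * Q ^ j) = 0 := by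
        rw [Finset.mul_sum]
        refine Finset.sum_eq_zero fun j _ => ?_
        rw [← mul_assoc, ← mul_assoc, hRPaR, zero_mul]
      rw [expand, hPSm, hQSm, hRSm, hPQa m, hQPa m, hRPa m,
        Finset.sum_range_succ (fun j => P ^ (m + 1 - j) * R * Q ^ j) (m + 1),
        Nat.sub_self, pow_zero, one_mul, ← pow_succ', ← pow_succ']
      noncomm_ring
  -- the candidate
  set S : Matrix (Fin n) (Fin n) ℂ := ∑ i ∈ range t, Pd ^ (i + 2) * R * Q ^ i with hS
  -- sum product identities
  have hQS : Q * S = 0 := by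
    rw [hS, Finset.mul_sum]
    refine Finset.sum_eq_zero fun i _ => ?_
    rw [← mul_assoc, ← mul_assoc, hQpdpow (i + 1), zero_mul, zero_mul]
  have hRS : R * S = 0 := by
    rw [hS, Finset.mul_sum]
    refine Finset.sum_eq_zero fun i _ => ?_
    rw [← mul_assoc, ← mul_assoc, hRpdpow (i + 1), zero_mul, zero_mul]
  have hSP : S * P = 0 := by
    rw [hS, Finset.sum_mul]
    refine Finset.sum_eq_zero fun i _ => ?_
    rw [mul_assoc (Pd ^ (i + 2)) R (Q ^ i), mul_assoc, hRQiP, mul_zero]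
  have hSR : S * R = 0 := by
    rw [hS, Finset.sum_mul]
    refine Finset.sum_eq_zero fun i _ => ?_
    rw [mul_assoc (Pd ^ (i + 2)) R (Q ^ i), mul_assoc, hRQiR, mul_zero]
  have hSPd : S * Pd = 0 := by
    rw [hS, Finset.sum_mul]
    refine Finset.sum_eq_zero fun i _ => ?_
    rw [mul_assoc (Pd ^ (i + 2)) R (Q ^ i), mul_assoc, hRQiPd, mul_zero]
  have hRQiS : ∀ i, R * Q ^ i * S = 0 := by
    intro i
    rw [hS, Finset.mul_sum]
    refine Finset.sum_eq_zero fun j _ => ?_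
    rw [← mul_assoc, ← mul_assoc, hRQipd i (j + 1), zero_mul, zero_mul]
  have hSS : S * S = 0 := by
    rw [hS, Finset.sum_mul]
    refine Finset.sum_eq_zero fun i _ => ?_
    rw [mul_assoc (Pd ^ (i + 2)) R (Q ^ i), mul_assoc, hRQiS, mul_zero]
  have hPS : P * S = ∑ i ∈ range t, Pd ^ (i + 1) * R * Q ^ i := by
    rw [hS, Finset.mul_sum]
    refine Finset.sum_congr rfl fun i _ => ?_
    rw [← mul_assoc, ← mul_assoc, hPpowPd i]
  have hSQ : S * Q = ∑ i ∈ range t, Pd ^ (i + 2) * R * Q ^ (i + 1) := by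
    rw [hS, Finset.sum_mul]
    refine Finset.sum_congr rfl fun i _ => ?_
    rw [mul_assoc, ← pow_succ]
  -- key identity : P * S = Pd * R + S * Q
  have keyid : P * S = Pd * R + S * Q := by
    rw [hPS, hSQ, ht']
    rw [Finset.sum_range_succ' (fun i => Pd ^ (i + 1) * R * Q ^ i) t',
      Finset.sum_range_succ (fun i => Pd ^ (i + 2) * R * Q ^ (i + 1)) t']
    have hlast : Pd ^ (t' + 2) * R * Q ^ (t' + 1) = 0 := by
      rw [mul_assoc, show t' + 1 = t from ht'.symm, hQt, mul_zero, mul_zero]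
    rw [hlast, add_zero, pow_one, pow_zero, mul_one]
    abel
  -- condition 1
  have hAX : (P + Q + R) * (Pd + S) = P * Pd + P * S := by
    simp only [add_mul, mul_add]
    rw [hQPd, hQS, hRPd, hRS]
    abel
  have hXA : (Pd + S) * (P + Q + R) = Pd * P + Pd * R + S * Q := by
    simp only [add_mul, mul_add]
    rw [hPdQ, hSP, hSR]
    abel
  have c1 : (P + Q + R) * (Pd + S) = (Pd + S) * (P + Q + R) := by
    rw [hAX, hXA, hc, keyid]
    abel
  -- condition 2
  have hPPdS : (P * Pd) * S = S := by
    rw [hS, Finset.mul_sum]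
    refine Finset.sum_congr rfl fun i _ => ?_
    calc (P * Pd) * (Pd ^ (i + 2) * R * Q ^ i)
        = (P * (Pd * Pd ^ (i + 2))) * (R * Q ^ i) := by simp only [mul_assoc]
      _ = (P * Pd ^ (i + 3)) * (R * Q ^ i) := by rw [← pow_succ']
      _ = Pd ^ (i + 2) * (R * Q ^ i) := by rw [hPpowPd (i + 1)]
      _ = Pd ^ (i + 2) * R * Q ^ i := by rw [mul_assoc]
  have c2 : (Pd + S) * (P + Q + R) * (Pd + S) = Pd + S := by
    rw [← c1, hAX, add_mul, mul_add, mul_add]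
    have e1 : P * Pd * Pd = Pd := by rw [mul_assoc, ← pow_two, hP2d]
    have e3 : P * S * Pd = 0 := by rw [mul_assoc, hSPd, mul_zero]
    have e4 : P * S * S = 0 := by rw [mul_assoc, hSS, mul_zero]
    rw [e1, hPPdS, e3, e4, add_zero, add_zero]
  -- condition 3
  have hQj : ∀ j, t ≤ j → Q ^ j = 0 := by
    intro j hj
    rw [show j = t + (j - t) by omega, pow_add, hQt, zero_mul]
  have hApd_a : (P + Q + R) ^ ((k + t + 1) + 1) * Pd = P ^ (k + t + 1) := by
    rw [powA (k + t + 1), add_mul, add_mul]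
    have e1 : P ^ ((k + t + 1) + 1) * Pd = P ^ (k + t + 1) := hka (k + t + 1) (by omega)
    have e2 : Q ^ ((k + t + 1) + 1) * Pd = 0 := by
      rw [pow_succ, mul_assoc, hQPd, mul_zero]
    have e3 : (∑ j ∈ range ((k + t + 1) + 1), P ^ ((k + t + 1) - j) * R * Q ^ j) * Pd
        = 0 := by
      rw [Finset.sum_mul]
      refine Finset.sum_eq_zero fun j _ => ?_
      rw [mul_assoc (P ^ ((k + t + 1) - j)) R (Q ^ j), mul_assoc, hRQiPd, mul_zero]
    rw [e1, e2, e3, add_zero, add_zero]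
  have hApd2 : ∀ l, l < t →
      (P + Q + R) ^ ((k + t + 1) + 1) * Pd ^ (l + 2) = P ^ (k + (t - l)) := by
    intro l hl
    rw [powA (k + t + 1), add_mul, add_mul]
    have e1 : P ^ ((k + t + 1) + 1) * Pd ^ (l + 2) = P ^ (k + (t - l)) := by
      rw [show (k + t + 1) + 1 = (k + (t - l)) + (l + 2) by omega]
      exact hpd (l + 2) (k + (t - l)) (by omega)
    have e2 : Q ^ ((k + t + 1) + 1) * Pd ^ (l + 2) = 0 := by
      rw [pow_succ, mul_assoc, hQpdpow (l + 1), mul_zero]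
    have e3 : (∑ j ∈ range ((k + t + 1) + 1), P ^ ((k + t + 1) - j) * R * Q ^ j)
        * Pd ^ (l + 2) = 0 := by
      rw [Finset.sum_mul]
      refine Finset.sum_eq_zero fun j _ => ?_
      rw [mul_assoc (P ^ ((k + t + 1) - j)) R (Q ^ j), mul_assoc, hRQipd j (l + 1),
        mul_zero]
    rw [e1, e2, e3, add_zero, add_zero]
  have hAS : (P + Q + R) ^ ((k + t + 1) + 1) * S
      = ∑ l ∈ range t, P ^ (k + (t - l)) * R * Q ^ l := by
    rw [hS, Finset.mul_sum]
    refine Finset.sum_congr rfl fun l hl => ?_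
    rw [← mul_assoc, ← mul_assoc, hApd2 l (Finset.mem_range.mp hl)]
  have c3 : (P + Q + R) ^ ((k + t + 1) + 1) * (Pd + S) = (P + Q + R) ^ (k + t + 1) := by
    rw [mul_add, hApd_a, hAS, show k + t + 1 = (k + t) + 1 from rfl, powA (k + t)]
    have e1 : Q ^ ((k + t) + 1) = 0 := hQj ((k + t) + 1) (by omega)
    have e2 : ∑ j ∈ range ((k + t) + 1), P ^ ((k + t) - j) * R * Q ^ j
        = ∑ l ∈ range t, P ^ (k + (t - l)) * R * Q ^ l := by
      rw [← Finset.sum_subset (Finset.range_subset_range.mpr (show t ≤ (k + t) + 1 by omega))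
        (fun j _ hj => by
          rw [hQj j (by simpa using hj), mul_zero])]
      refine Finset.sum_congr rfl fun l hl => ?_
      have : l < t := Finset.mem_range.mp hl
      rw [show (k + t) - l = k + (t - l) by omega]
    rw [e1, e2]
    rw [show P ^ ((k + t) + 1) = P ^ (k + t + 1) from rfl]
    abel
  exact dz_eq (P + Q + R) (Pd + S) c1 c2 ⟨k + t + 1, c3⟩
end

section
/- Let A, B, C, D be complex matrices of compatible sizes with A, D square. Set S = A − C D^d B, H = B A^d, K = A^d C, Γ = H K, E = A A^d − K Γ^d H. If A^π C D^d B = 0 and K Γ^d H S A^d = 0, then S^d = (E S E)^d + ∑_{i=0}^{t-1} ((E S E)^d)^{i+2} (S E^π)^{i+1}, where t = ind(E^π S E^π). -/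
open Matrix Finset

attribute [local instance] Classical.propDecidable

/-!
Put `p = A^π = 1 - AA^d` and `f = KΓ^dH`, an idempotent with `AA^d f = f = f AA^d`, so that
`E = AA^d - f` is idempotent and `1 - E = p + f`. The hypotheses say `pS = pA = Ap` and
`fSA^d = 0`; hence `fSE = fSf = 0` and `pSE = ApE = 0`. Thus `(1 - E)SE = 0`, and
`(1 - E)S(1 - E) = Ap + fS` is nilpotent: `Ap` is the nilpotent part of `A`, `fS` squares to zero
and `Ap · fS = 0`.

So `S = w + n` with `w = ESE`, `n = S(1 - E)`, `nw = 0` and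
`n^(t+1) = S((1 - E)S(1 - E))^t(1 - E) = 0`. For such a splitting
`(w + n)^d = w^d + ∑_{i<t} (w^d)^(i+2) n^(i+1)`, which is checked against the three defining
equations of the Drazin inverse, the last one through `(w + n)^K = ∑ w^(K-i) n^i`.
-/

theorem add_pow_of_mul_eq_zero {R : Type*} [Semiring R] {a b : R} (h : b * a = 0) (m : ℕ) :
    (a + b) ^ m = ∑ i ∈ range (m + 1), a ^ (m - i) * b ^ i := by
  induction m with
  | zero => simp
  | succ m ih =>
    have hb : ∑ i ∈ range m, b * (a ^ (m - i) * b ^ i) = 0 := sum_eq_zero fun i hi => by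
      obtain ⟨j, hj⟩ : ∃ j, m - i = j + 1 := ⟨m - i - 1, by have := mem_range.1 hi; omega⟩
      rw [hj, ← mul_assoc, pow_succ', ← mul_assoc, h, zero_mul, zero_mul]
    rw [pow_succ', ih, add_mul, mul_sum, mul_sum, sum_range_succ (fun i => b * _), hb,
      sum_range_succ _ (m + 1)]
    simp only [Nat.sub_self, pow_zero, one_mul, zero_add, ← mul_assoc, ← pow_succ']
    congr 1
    refine sum_congr rfl fun i hi => ?_
    rw [show m + 1 - i = m - i + 1 by have := mem_range.1 hi; omega]

theorem isNilpotent_add_of_mul_eq_zero {R : Type*} [Semiring R] {a b : R} (h : b * a = 0)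
    (ha : IsNilpotent a) (hb : IsNilpotent b) : IsNilpotent (a + b) := by
  obtain ⟨p, hp⟩ := ha
  obtain ⟨q, hq⟩ := hb
  refine ⟨p + q, ?_⟩
  rw [add_pow_of_mul_eq_zero h]
  refine sum_eq_zero fun i _ => ?_
  rcases lt_or_ge i q with hi | hi
  · rw [pow_eq_zero_of_le (by omega) hp, zero_mul]
  · rw [pow_eq_zero_of_le hi hq, mul_zero]

theorem IsIdempotentElem.mul_pow_succ {M : Type*} [Monoid M] {p : M}
    (hp : IsIdempotentElem p) (s : M) (j : ℕ) : (s * p) ^ (j + 1) = s * (p * s * p) ^ j * p := by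
  induction j with
  | zero => simp
  | succ j ih =>
    have hMp : p * s * p * p = p * s * p := by rw [mul_assoc _ p p, hp.eq]
    calc (s * p) ^ (j + 1 + 1) = s * (p * s * p) ^ j * (p * s * p) := by
          rw [pow_succ, ih]; simp only [mul_assoc]
      _ = s * (p * s * p) ^ (j + 1) * p := by
          rw [pow_succ, mul_assoc s, mul_assoc s, mul_assoc ((p * s * p) ^ j), hMp]

def IsDrazinInverse {M : Type*} [Monoid M] (a x : M) : Prop :=
  a * x = x * a ∧ x * a * x = x ∧ ∃ k : ℕ, a ^ (k + 1) * x = a ^ k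

namespace IsDrazinInverse

section Monoid

variable {M : Type*} [Monoid M] {a b x y : M}

theorem commute (h : IsDrazinInverse a x) : Commute a x := h.1

theorem mul_mul_self (h : IsDrazinInverse a x) : a * x * x = x := by
  rw [h.1, h.2.1]

theorem isIdempotentElem_mul (h : IsDrazinInverse a x) : IsIdempotentElem (a * x) := by
  rw [IsIdempotentElem, mul_assoc, ← mul_assoc x, h.2.1]

theorem pow_succ_mul_pow (h : IsDrazinInverse a x) (j : ℕ) : x ^ (j + 1) * a ^ j = x := by
  induction j with
  | zero => simp
  | succ j ih =>
    calc x ^ (j + 1 + 1) * a ^ (j + 1) = x * (x ^ (j + 1) * a ^ j) * a := by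
          rw [pow_succ' x, pow_succ a]; simp only [mul_assoc]
      _ = x := by rw [ih, mul_assoc, ← h.1, ← mul_assoc, h.2.1]

theorem eventually_pow_succ_mul (h : IsDrazinInverse a x) :
    ∀ᶠ j in Filter.atTop, a ^ (j + 1) * x = a ^ j := by
  obtain ⟨k, hk⟩ := h.2.2
  refine Filter.eventually_atTop.2 ⟨k, fun j hj => ?_⟩
  obtain ⟨i, rfl⟩ := Nat.exists_eq_add_of_le' hj
  rw [add_assoc, pow_add, mul_assoc, hk, pow_add]

theorem eventually_pow_add_mul_pow (h : IsDrazinInverse a x) :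
    ∀ᶠ j in Filter.atTop, ∀ i, a ^ (j + i) * x ^ i = a ^ j := by
  obtain ⟨k, hk⟩ := Filter.eventually_atTop.1 h.eventually_pow_succ_mul
  refine Filter.eventually_atTop.2 ⟨k, fun j hj i => ?_⟩
  induction i with
  | zero => simp
  | succ i ih =>
    rw [← add_assoc, pow_succ' x, ← mul_assoc, hk _ (by omega), ih]

theorem unique (hx : IsDrazinInverse a x) (hy : IsDrazinInverse a y) : x = y := by
  obtain ⟨m, hxm, hym⟩ := (hx.eventually_pow_succ_mul.and hy.eventually_pow_succ_mul).exists
  have hxa : a ^ m * x ^ (m + 1) = x := by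
    rw [(hx.commute.pow_pow m (m + 1)).eq, hx.pow_succ_mul_pow]
  have ham : a ^ m = y * a * a ^ m := by
    rw [mul_assoc, ← pow_succ', ← (hy.commute.pow_left (m + 1)).eq, hym]
  have hx_eq : x = y * a * x :=
    calc x = a ^ m * x ^ (m + 1) := hxa.symm
      _ = y * a * (a ^ m * x ^ (m + 1)) := by rw [← mul_assoc, ← ham]
      _ = y * a * x := by rw [hxa]
  have hy_eq : y = y * a * x :=
    calc y = y ^ (m + 1) * a ^ m := (hy.pow_succ_mul_pow m).symm
      _ = y ^ (m + 1) * a ^ m * (a * x) := by rw [mul_assoc, ← mul_assoc (a ^ m), ← pow_succ, hxm]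
      _ = y * a * x := by rw [hy.pow_succ_mul_pow, mul_assoc]
  rw [hx_eq, ← hy_eq]

/-- Drazin's construction: a strongly π-regular element is Drazin invertible. -/
theorem of_pow_eq_mul_pow_succ {k : ℕ} (hab : Commute a b) (h : a ^ k = b * a ^ (k + 1)) :
    IsDrazinInverse a (b ^ (k + 1) * a ^ k) := by
  have hpow : ∀ j, b ^ j * a ^ (k + j) = a ^ k := by
    intro j
    induction j with
    | zero => simp
    | succ j ih =>
      rw [pow_succ b, ← add_assoc, add_right_comm, pow_add a (k + 1) j, mul_assoc,
        ← mul_assoc b, ← h, ← pow_add, ih]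
  have hpower : a ^ (k + 1) * (b ^ (k + 1) * a ^ k) = a ^ k := by
    rw [← mul_assoc, (hab.pow_pow (k + 1) (k + 1)).eq, mul_assoc, ← pow_add, add_comm (k + 1) k,
      hpow]
  refine ⟨((hab.pow_right _).mul_right (Commute.self_pow a k)).eq, ?_, k, hpower⟩
  rw [mul_assoc, mul_assoc, ← mul_assoc (a ^ k), ← pow_succ, hpower]

end Monoid

open Polynomial in
theorem exists_of_aeval_eq_zero {K R : Type*} [Field K] [Ring R] [Algebra K R] {a : R}
    {p : K[X]} (hp : p ≠ 0) (hpa : aeval a p = 0) : ∃ x, IsDrazinInverse a x := by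
  -- Write `p = X^k q` with `X ∤ q`; Bézout for `X^(k+1)` and `q` gives `a^k = (u(a) a^k) a^(k+1)`.
  obtain ⟨q, hpq, hq⟩ := exists_eq_pow_rootMultiplicity_mul_and_not_dvd p hp 0
  set k := p.rootMultiplicity 0
  rw [map_zero, sub_zero] at hpq hq
  obtain ⟨u, v, huv⟩ := (irreducible_X.coprime_iff_not_dvd.2 hq).pow_left (m := k + 1)
  have hkey : u * X ^ k * X ^ (k + 1) = X ^ k - v * p := by
    rw [hpq]; linear_combination (X : K[X]) ^ k * huv
  have hcomm : Commute a (aeval a (u * X ^ k)) := by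
    simpa only [aeval_X] using (Commute.all (X : K[X]) (u * X ^ k)).map (aeval a)
  have hpow : a ^ k = aeval a (u * X ^ k) * a ^ (k + 1) := by
    simpa [hpa] using (congrArg (aeval a) hkey).symm
  exact ⟨_, of_pow_eq_mul_pow_succ hcomm hpow⟩

section Ring

variable {R : Type*} [Ring R] {a w n x s e y f : R}

theorem commute_one_sub_mul (h : IsDrazinInverse a x) : Commute a (1 - a * x) :=
  (Commute.one_right a).sub_right ((Commute.refl a).mul_right h.commute)

theorem isNilpotent_mul_one_sub (h : IsDrazinInverse a x) : IsNilpotent (a * (1 - a * x)) := by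
  obtain ⟨k, hk⟩ := h.2.2
  refine ⟨k + 1, ?_⟩
  rw [h.commute_one_sub_mul.mul_pow, h.isIdempotentElem_mul.one_sub.pow_succ_eq, mul_sub,
    mul_one, h.1, ← mul_assoc, hk, ← pow_succ, sub_self]

theorem mul_eq_zero_of_mul_eq_zero (hx : IsDrazinInverse w x) (hnw : n * w = 0) :
    n * x = 0 := by
  rw [← hx.mul_mul_self, ← mul_assoc, ← mul_assoc, hnw, zero_mul, zero_mul]

theorem mul_pow_succ_eq_zero (hx : IsDrazinInverse w x) (hnw : n * w = 0) (j : ℕ) :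
    n * x ^ (j + 1) = 0 := by
  rw [pow_succ', ← mul_assoc, hx.mul_eq_zero_of_mul_eq_zero hnw, zero_mul]

theorem add_mul_sum (hx : IsDrazinInverse w x) (hnw : n * w = 0) (t : ℕ) :
    (w + n) * (x + ∑ i ∈ range t, x ^ (i + 2) * n ^ (i + 1)) =
      w * x + ∑ i ∈ range t, x ^ (i + 1) * n ^ (i + 1) := by
  have hnx := hx.mul_eq_zero_of_mul_eq_zero hnw
  simp only [add_mul, mul_add, mul_sum, pow_succ' x, ← mul_assoc, hx.mul_mul_self, hnx, add_zero]

theorem sum_mul_add (hx : IsDrazinInverse w x) (hnw : n * w = 0) {t : ℕ}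
    (hnt : n ^ (t + 1) = 0) :
    (x + ∑ i ∈ range t, x ^ (i + 2) * n ^ (i + 1)) * (w + n) =
      w * x + ∑ i ∈ range t, x ^ (i + 1) * n ^ (i + 1) := by
  have hnw' : ∀ i : ℕ, n ^ (i + 1) * w = 0 := fun i => by rw [pow_succ, mul_assoc, hnw, mul_zero]
  have hsum : x * n + ∑ i ∈ range t, x ^ (i + 2) * n ^ (i + 2) =
      ∑ i ∈ range t, x ^ (i + 1) * n ^ (i + 1) :=
    calc x * n + ∑ i ∈ range t, x ^ (i + 2) * n ^ (i + 2)
        = ∑ i ∈ range (t + 1), x ^ (i + 1) * n ^ (i + 1) := by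
          rw [sum_range_succ', add_comm, zero_add, pow_one, pow_one]
      _ = ∑ i ∈ range t, x ^ (i + 1) * n ^ (i + 1) := by
          rw [sum_range_succ, hnt, mul_zero, add_zero]
  simp only [add_mul, mul_add, sum_mul, mul_assoc, hnw', mul_zero, sum_const_zero, add_zero,
    ← pow_succ]
  rw [← hx.1, ← hsum]

theorem sum_mul_add_mul_sum (hx : IsDrazinInverse w x) (hnw : n * w = 0) {t : ℕ}
    (hnt : n ^ (t + 1) = 0) :
    (x + ∑ i ∈ range t, x ^ (i + 2) * n ^ (i + 1)) * (w + n) *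
      (x + ∑ i ∈ range t, x ^ (i + 2) * n ^ (i + 1)) =
      x + ∑ i ∈ range t, x ^ (i + 2) * n ^ (i + 1) := by
  set X := x + ∑ i ∈ range t, x ^ (i + 2) * n ^ (i + 1)
  have hnX : n * X = 0 := by
    simp only [X, mul_add, mul_sum, ← mul_assoc, hx.mul_eq_zero_of_mul_eq_zero hnw,
      hx.mul_pow_succ_eq_zero hnw, zero_mul, sum_const_zero, add_zero]
  have hnX' : ∀ i : ℕ, n ^ (i + 1) * X = 0 := fun i => by rw [pow_succ, mul_assoc, hnX, mul_zero]
  have hwxX : w * x * X = X := by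
    simp only [X, mul_add, mul_sum, pow_succ' x, ← mul_assoc, hx.mul_mul_self]
  rw [hx.sum_mul_add hnw hnt, add_mul, sum_mul]
  simp only [mul_assoc, hnX', mul_zero, sum_const_zero, add_zero]
  rw [← mul_assoc, hwxX]

theorem exists_add_pow_succ_mul_sum (hx : IsDrazinInverse w x) (hnw : n * w = 0) {t : ℕ}
    (hnt : n ^ (t + 1) = 0) : ∃ K : ℕ,
      (w + n) ^ (K + 1) * (x + ∑ i ∈ range t, x ^ (i + 2) * n ^ (i + 1)) = (w + n) ^ K := by
  obtain ⟨k, hk⟩ := Filter.eventually_atTop.1 hx.eventually_pow_add_mul_pow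
  have hne : n * (w * x + ∑ i ∈ range t, x ^ (i + 1) * n ^ (i + 1)) = 0 := by
    simp only [mul_add, mul_sum, ← mul_assoc, hnw, hx.mul_pow_succ_eq_zero hnw, zero_mul,
      sum_const_zero, add_zero]
  have hne' : ∀ j : ℕ, n ^ (j + 1) * (w * x + ∑ i ∈ range t, x ^ (i + 1) * n ^ (i + 1)) = 0 :=
    fun j => by rw [pow_succ, mul_assoc, hne, mul_zero]
  have hbin : ∀ K, (w + n) ^ K = w ^ K + ∑ i ∈ range K, w ^ (K - (i + 1)) * n ^ (i + 1) := by
    intro K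
    rw [add_pow_of_mul_eq_zero hnw, sum_range_succ', add_comm, Nat.sub_zero, pow_zero, mul_one]
  have hwx : ∀ i < t, w ^ (t + k) * x ^ (i + 1) = w ^ (t + k - (i + 1)) := fun i hi => by
    rw [← hk (t + k - (i + 1)) (by omega) (i + 1), Nat.sub_add_cancel (by omega)]
  have hw1 : w ^ (t + k + 1) * x = w ^ (t + k) := by simpa using hk (t + k) (by omega) 1
  refine ⟨t + k, ?_⟩
  rw [pow_succ, mul_assoc, hx.add_mul_sum hnw, hbin, add_mul, sum_mul]
  simp only [mul_assoc, hne', mul_zero, sum_const_zero, add_zero]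
  have htail : ∑ j ∈ range k, w ^ (t + k - (t + j + 1)) * n ^ (t + j + 1) = 0 :=
    sum_eq_zero fun j _ => by rw [pow_eq_zero_of_le (by omega) hnt, mul_zero]
  rw [mul_add, ← mul_assoc, ← pow_succ, hw1, mul_sum, sum_range_add, htail, add_zero]
  refine congrArg _ (sum_congr rfl fun i hi => ?_)
  rw [← mul_assoc, hwx i (mem_range.1 hi)]

theorem add_of_mul_eq_zero (hx : IsDrazinInverse w x) (hnw : n * w = 0) {t : ℕ}
    (hnt : n ^ (t + 1) = 0) :
    IsDrazinInverse (w + n) (x + ∑ i ∈ range t, x ^ (i + 2) * n ^ (i + 1)) :=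
  ⟨(hx.add_mul_sum hnw t).trans (hx.sum_mul_add hnw hnt).symm,
    hx.sum_mul_add_mul_sum hnw hnt, hx.exists_add_pow_succ_mul_sum hnw hnt⟩

theorem of_isIdempotentElem (he : IsIdempotentElem e) (hse : (1 - e) * s * e = 0) {t : ℕ}
    (ht : ((1 - e) * s * (1 - e)) ^ t = 0) (hy : IsDrazinInverse (e * s * e) y) :
    IsDrazinInverse s (y + ∑ i ∈ range t, y ^ (i + 2) * (s * (1 - e)) ^ (i + 1)) := by
  have hsplit : e * s * e + s * (1 - e) = s := by
    rw [sub_mul, sub_mul, one_mul, sub_eq_zero] at hse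
    rw [← hse, ← mul_add, add_sub_cancel, mul_one]
  have hnw : s * (1 - e) * (e * s * e) = 0 := by
    rw [mul_assoc, ← mul_assoc (1 - e), ← mul_assoc (1 - e), he.one_sub_mul_self, zero_mul,
      zero_mul, mul_zero]
  have hnt : (s * (1 - e)) ^ (t + 1) = 0 := by
    rw [he.one_sub.mul_pow_succ, ht, mul_zero, zero_mul]
  simpa only [hsplit] using hy.add_of_mul_eq_zero hnw hnt

theorem one_sub_mul_mul_eq_zero (hx : IsDrazinInverse a x) (hqf : a * x * f = f)
    (hps : (1 - a * x) * s = (1 - a * x) * a) (hfs : f * s * x = 0) :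
    (1 - (a * x - f)) * s * (a * x - f) = 0 := by
  have hpf : (1 - a * x) * f = 0 := by
    rw [← hqf, ← mul_assoc, hx.isIdempotentElem_mul.one_sub_mul_self, zero_mul]
  have hpe : (1 - a * x) * (a * x - f) = 0 := by
    rw [mul_sub, hx.isIdempotentElem_mul.one_sub_mul_self, hpf, sub_zero]
  have hfsq : f * s * (a * x) = 0 := by rw [hx.1, ← mul_assoc, hfs, zero_mul]
  have hfsf : f * s * f = 0 := by rw [← zero_mul f, ← hfsq, mul_assoc _ (a * x), hqf]
  rw [show 1 - (a * x - f) = 1 - a * x + f by abel, add_mul, add_mul, hps,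
    ← hx.commute_one_sub_mul.eq, mul_assoc a, hpe, mul_zero, mul_sub, hfsq, hfsf, sub_self,
    add_zero]

theorem isNilpotent_one_sub_mul_mul_one_sub (hx : IsDrazinInverse a x) (hqf : a * x * f = f)
    (hps : (1 - a * x) * s = (1 - a * x) * a) (hfs : f * s * x = 0) :
    IsNilpotent ((1 - (a * x - f)) * s * (1 - (a * x - f))) := by
  have hpf : (1 - a * x) * f = 0 := by
    rw [← hqf, ← mul_assoc, hx.isIdempotentElem_mul.one_sub_mul_self, zero_mul]
  have hfsq : f * s * (a * x) = 0 := by rw [hx.1, ← mul_assoc, hfs, zero_mul]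
  have hfsf : f * s * f = 0 := by rw [← zero_mul f, ← hfsq, mul_assoc _ (a * x), hqf]
  have hM : (1 - (a * x - f)) * s * (1 - (a * x - f)) = f * s + a * (1 - a * x) := by
    rw [show 1 - (a * x - f) = 1 - a * x + f by abel, add_mul, add_mul, mul_add, mul_add,
      hps, ← hx.commute_one_sub_mul.eq, mul_assoc a, hx.isIdempotentElem_mul.one_sub.eq,
      mul_assoc a, hpf, mul_zero, add_zero, hfsf, add_zero, mul_sub (f * s), mul_one, hfsq,
      sub_zero, add_comm]
  rw [hM]
  refine isNilpotent_add_of_mul_eq_zero ?_ ⟨2, ?_⟩ hx.isNilpotent_mul_one_sub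
  · rw [mul_assoc, ← mul_assoc (1 - a * x), hpf, zero_mul, mul_zero]
  · rw [sq, ← mul_assoc, hfsf, zero_mul]

end Ring

end IsDrazinInverse

section Matrix

variable {n : Type*} [Fintype n] [DecidableEq n]

theorem isDrazinInverse_drazin (A : Matrix n n ℂ) : IsDrazinInverse A (drazin A) := by
  have h : ∃ X, IsDrazinInverse A X :=
    IsDrazinInverse.exists_of_aeval_eq_zero A.charpoly_monic.ne_zero A.aeval_self_charpoly
  simp only [drazin, IsDrazinInverse] at h ⊢
  rw [dif_pos h]
  exact h.choose_spec

theorem drazin_eq_of_isDrazinInverse {A X : Matrix n n ℂ} (h : IsDrazinInverse A X) :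
    drazin A = X :=
  (isDrazinInverse_drazin A).unique h

theorem pow_ind_eq_zero_s10 {M : Matrix n n ℂ} (hM : IsNilpotent M) : M ^ ind M = 0 := by
  obtain ⟨s, hs⟩ := hM
  have hrank : (M ^ ind M).rank = (M ^ (ind M + 1)).rank :=
    Nat.sInf_mem (s := {k | (M ^ k).rank = (M ^ (k + 1)).rank}) ⟨s, by simp [hs, pow_succ]⟩
  rw [Matrix.rank, Matrix.rank, ← Matrix.toLin'_apply', ← Matrix.toLin'_apply',
    Matrix.toLin'_pow, Matrix.toLin'_pow] at hrank
  set f := Matrix.toLin' M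
  have hker : LinearMap.ker (f ^ ind M) = LinearMap.ker (f ^ (ind M + 1)) := by
    refine Submodule.eq_of_le_of_finrank_eq
      (by rw [pow_succ', Module.End.mul_eq_comp]; exact LinearMap.ker_le_ker_comp _ _) ?_
    have := (f ^ ind M).finrank_range_add_finrank_ker
    have := (f ^ (ind M + 1)).finrank_range_add_finrank_ker
    omega
  have htop : LinearMap.ker (f ^ ind M) = ⊤ := by
    rw [Module.End.ker_pow_constant hker s, pow_add, ← Matrix.toLin'_pow M s, hs, map_zero,
      mul_zero, LinearMap.ker_zero]
  rw [← Matrix.toLin'.map_eq_zero_iff, Matrix.toLin'_pow]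
  exact LinearMap.ker_eq_top.1 htop

end Matrix

theorem isIdempotentElem_mul_drazin_mul {n m : Type*} [Fintype n] [Fintype m] [DecidableEq m]
    (K : Matrix n m ℂ) (H : Matrix m n ℂ) : IsIdempotentElem (K * drazin (H * K) * H) := by
  have hd := (isDrazinInverse_drazin (H * K)).2.1
  rw [IsIdempotentElem]
  conv_rhs => rw [← hd]
  simp only [Matrix.mul_assoc]

theorem stmt10 {n m : ℕ} (A : Matrix (Fin n) (Fin n) ℂ) (D : Matrix (Fin m) (Fin m) ℂ)
    (C : Matrix (Fin n) (Fin m) ℂ) (B : Matrix (Fin m) (Fin n) ℂ)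
    (H : Matrix (Fin m) (Fin n) ℂ) (hH : H = B * drazin A)
    (K : Matrix (Fin n) (Fin m) ℂ) (hK : K = drazin A * C)
    (G : Matrix (Fin m) (Fin m) ℂ) (hG : G = H * K)
    (S : Matrix (Fin n) (Fin n) ℂ) (hS : S = A - C * drazin D * B)
    (E : Matrix (Fin n) (Fin n) ℂ) (hE : E = A * drazin A - K * drazin G * H)
    (h1 : spi A * (C * drazin D * B) = 0)
    (h2 : K * drazin G * H * S * drazin A = 0) :
    drazin S = drazin (E * S * E) +
      ∑ i ∈ range (ind ((1 - E) * S * (1 - E))),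
        (drazin (E * S * E)) ^ (i + 2) * (S * (1 - E)) ^ (i + 1) := by
  have hA := isDrazinInverse_drazin A
  have hF : IsIdempotentElem (K * drazin G * H) := hG ▸ isIdempotentElem_mul_drazin_mul K H
  have hAF : A * drazin A * (K * drazin G * H) = K * drazin G * H := by
    simp only [hK, ← Matrix.mul_assoc, hA.mul_mul_self]
  have hFA : K * drazin G * H * (A * drazin A) = K * drazin G * H := by
    rw [hH, Matrix.mul_assoc (K * drazin G), Matrix.mul_assoc B, ← Matrix.mul_assoc (drazin A) A,
      hA.2.1]
  have hSA : (1 - A * drazin A) * S = (1 - A * drazin A) * A := by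
    rw [hS, mul_sub, ← spi, h1, sub_zero]
  have hESE : (1 - E) * S * E = 0 := hE ▸ hA.one_sub_mul_mul_eq_zero hAF hSA h2
  have hnil : IsNilpotent ((1 - E) * S * (1 - E)) :=
    hE ▸ hA.isNilpotent_one_sub_mul_mul_one_sub hAF hSA h2
  exact drazin_eq_of_isDrazinInverse <| (isDrazinInverse_drazin _).of_isIdempotentElem
    (hE ▸ hF.sub hA.isIdempotentElem_mul hFA hAF) hESE (pow_ind_eq_zero_s10 hnil)
end
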